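/- arXiv:1810.03881 — 5 statements merged into one kernel-verified Lean document; each statement's English description precedes it below -/
import Mathlib

section
/- Let p be an odd prime and m a positive integer not divisible by p. Let T be a finite abelian group whose cardinality is a power of p, let λ : T × T → ℚ/ℤ be a non-degenerate linking form on T, and let φ be an automorphism of T with φ^m = id and λ(φx, φy) = λ(x, y) for all x, y ∈ T. Then there exist finitely many subgroups T₁, T₂, …, T_N of T such that: T is the internal direct sum of T₁, …, T_N; each Tᵢ is invariant under φ; the Tᵢ are pairwise orthogonal with respect to λ (λ(x, y) = 0 whenever x ∈ Tᵢ, y ∈ Tⱼ, i ≠ j); and each Tᵢ is isomorphic, as an abelian group, to (ℤ/pⁱℤ)^{nᵢ} for some integer nᵢ ≥ 0. -/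
/-!
Induction on the exponent `p ^ (e + 1)` of `T`. In a cyclic decomposition of `T`, the projection
`π` onto the summands of order `p ^ (e + 1)` is the identity modulo `T[p ^ e]` and maps `T[p ^ e]`
into `p T`. Averaging the conjugates of `π` by the powers of `φ` (possible since `p ∤ m`) gives a
`φ`-equivariant `ψ` with the same two properties, and its Fitting component
`U = ⋂ n, range ψ ^ n` is then a `φ`-invariant free `ℤ/p^(e+1)`-module with `p ^ e U = p ^ e T`.
These two facts make the linking form nondegenerate on `U`, so `T = U ⊕ U^⊥`, where `U^⊥` is
`φ`-invariant, carries a nondegenerate form and has exponent `p ^ e`; recurse on `U^⊥`.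
Splitting off `U` uses that `Hom(U, ℚ/ℤ)` is no larger than `U`, which follows by embedding it
into the complex characters of `U`.
-/

noncomputable def AddCircle.ratToReal : AddCircle (1 : ℚ) →+ AddCircle (1 : ℝ) :=
  QuotientAddGroup.map _ _ (Rat.castHom ℝ).toAddMonoidHom fun _ ⟨n, hn⟩ ↦ ⟨n, by simp [← hn]⟩

theorem AddCircle.ratToReal_injective : Function.Injective AddCircle.ratToReal := by
  refine (injective_iff_map_eq_zero _).2 fun x hx ↦ ?_
  induction x using QuotientAddGroup.induction_on with | H q => ?_
  obtain ⟨n, hn⟩ := (AddCircle.coe_eq_zero_iff (1 : ℝ)).1 hx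
  refine (AddCircle.coe_eq_zero_iff (1 : ℚ)).2 ⟨n, ?_⟩
  simpa using (Rat.cast_injective (α := ℝ) (by simpa using hn) : (n : ℚ) = q)

namespace CharacterModule

variable {A : Type*} [AddCommGroup A]

noncomputable def toAddChar (c : CharacterModule A) : AddChar A ℂ :=
  Circle.coeHom.compAddChar
    (AddCircle.toCircle_addChar.compAddMonoidHom (AddCircle.ratToReal.comp c))

theorem toAddChar_injective : Function.Injective (toAddChar (A := A)) := fun c₁ c₂ h ↦ by
  ext a
  exact AddCircle.ratToReal_injective (AddCircle.injective_toCircle one_ne_zero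
    (Circle.coe_injective (DFunLike.congr_fun h a)))

instance [Finite A] : Finite (CharacterModule A) :=
  Finite.of_injective _ toAddChar_injective

theorem card_le [Finite A] : Nat.card (CharacterModule A) ≤ Nat.card A := by
  have := Fintype.ofFinite A
  calc Nat.card (CharacterModule A) ≤ Nat.card (AddChar A ℂ) :=
        Nat.card_le_card_of_injective _ toAddChar_injective
    _ ≤ Nat.card A := by simpa only [Nat.card_eq_fintype_card] using AddChar.card_addChar_le A ℂ

end CharacterModule

namespace LinearMap

section Orthogonal

variable {R M N : Type*} [CommRing R] [AddCommGroup M] [Module R M] [AddCommGroup N] [Module R N]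
  {B : M →ₗ[R] M →ₗ[R] N}

theorem IsRefl.disjoint_orthogonalBilin (hB : B.IsRefl) {U : Submodule R M}
    (hU : (B.domRestrict₁₂ U U).SeparatingLeft) : Disjoint U (U.orthogonalBilin B) := by
  refine Submodule.disjoint_def.2 fun x hxU hx ↦ ?_
  simpa using hU ⟨x, hxU⟩ fun v ↦ hB _ _ (hx v v.2)

theorem IsRefl.separatingLeft_domRestrict_orthogonalBilin (hB : B.IsRefl)
    (hsep : B.SeparatingLeft) {U : Submodule R M} (hU : Codisjoint U (U.orthogonalBilin B)) :
    (B.domRestrict₁₂ (U.orthogonalBilin B) (U.orthogonalBilin B)).SeparatingLeft := by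
  rintro ⟨x, hx⟩ hxV
  suffices ∀ t, B x t = 0 from Subtype.ext (hsep x this)
  intro t
  obtain ⟨u, hu, v, hv, rfl⟩ := Submodule.mem_sup.1 (hU.eq_top ▸ Submodule.mem_top : t ∈ _)
  rw [map_add, hB _ _ (hx u hu), zero_add]
  exact hxV ⟨v, hv⟩

theorem IsRefl.iSupIndep_of_orthogonal (hB : B.IsRefl) {ι : Type*} {W : ι → Submodule R M}
    (horth : Pairwise fun i j ↦ ∀ x ∈ W i, ∀ y ∈ W j, B x y = 0)
    (hsep : ∀ i, (B.domRestrict₁₂ (W i) (W i)).SeparatingLeft) : iSupIndep W :=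
  iSupIndep_def.2 fun i ↦ (hB.disjoint_orthogonalBilin (hsep i)).mono_right <|
    iSup₂_le fun _ hji x hx ↦ (Submodule.mem_orthogonalBilin_iff).2 fun y hy ↦
      horth (Ne.symm hji) y hy x hx

theorem orthogonalBilin_mapsTo {f : Module.End R M} (hf : ∀ x y, B (f x) (f y) = B x y)
    {U : Submodule R M} (hU : U ≤ U.map f) (x : M) (hx : x ∈ U.orthogonalBilin B) :
    f x ∈ U.orthogonalBilin B := by
  intro u hu
  obtain ⟨u', hu', rfl⟩ := hU hu
  rw [hf]
  exact hx u' hu'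

theorem SeparatingLeft.domRestrict_map_subtype {V : Submodule R M} {W : Submodule R V}
    (h : ((B.domRestrict₁₂ V V).domRestrict₁₂ W W).SeparatingLeft) :
    (B.domRestrict₁₂ (W.map V.subtype) (W.map V.subtype)).SeparatingLeft := by
  rintro ⟨_, v, hv, rfl⟩ hx
  have := h ⟨v, hv⟩ fun w ↦ hx ⟨w, Submodule.mem_map_of_mem w.2⟩
  simp only [Subtype.ext_iff, Submodule.coe_zero] at this
  simp [this]

end Orthogonal

section LinkingForm

variable {T : Type*} [AddCommGroup T] {B : T →ₗ[ℤ] T →ₗ[ℤ] AddCircle (1 : ℚ)}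

/-- Nondegeneracy on `U` makes `u ↦ B (·) u` an injection of `U` into its character group, which
is no larger than `U`; surjectivity then produces the `U`-component of any `t`. -/
theorem IsRefl.codisjoint_orthogonalBilin (hB : B.IsRefl) {U : Submodule ℤ T} [Finite U]
    (hU : (B.domRestrict₁₂ U U).SeparatingLeft) : Codisjoint U (U.orthogonalBilin B) := by
  let r : U → CharacterModule U := fun u ↦ ((B.domRestrict₁₂ U U).flip u).toAddMonoidHom
  have hr : Function.Injective r := fun u₁ u₂ h ↦ by
    rw [← sub_eq_zero]
    refine hU _ fun v ↦ hB _ _ ?_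
    have : B v u₁ = B v u₂ := DFunLike.congr_fun h v
    simp [this]
  refine codisjoint_iff.2 (eq_top_iff.2 fun t _ ↦ ?_)
  obtain ⟨u, hu⟩ := (hr.bijective_of_nat_card_le CharacterModule.card_le).2
    ((B.flip t).comp U.subtype).toAddMonoidHom
  refine Submodule.mem_sup.2 ⟨u, u.2, t - u, fun v hv ↦ ?_, add_sub_cancel _ _⟩
  have : B v u = B v t := DFunLike.congr_fun hu ⟨v, hv⟩
  rw [map_sub, this, sub_self]

theorem IsRefl.isCompl_orthogonalBilin (hB : B.IsRefl) {U : Submodule ℤ T} [Finite U]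
    (hU : (B.domRestrict₁₂ U U).SeparatingLeft) : IsCompl U (U.orthogonalBilin B) :=
  ⟨hB.disjoint_orthogonalBilin hU, hB.codisjoint_orthogonalBilin hU⟩

end LinkingForm

theorem exists_eq_of_map_add_left_of_symm {T A : Type*} [AddCommGroup T] [AddCommGroup A]
    (lk : T → T → A) (hadd : ∀ x y z : T, lk (x + y) z = lk x z + lk y z)
    (hsymm : ∀ x y : T, lk x y = lk y x) : ∃ B : T →ₗ[ℤ] T →ₗ[ℤ] A, ∀ x y, B x y = lk x y := by
  have hzsmul (c : ℤ) (x y : T) : lk (c • x) y = c • lk x y :=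
    map_zsmul (AddMonoidHom.mk' (lk · y) (hadd · · y)) c x
  exact ⟨LinearMap.mk₂ ℤ lk hadd hzsmul (fun x y z ↦ by rw [hsymm, hadd, hsymm y, hsymm z])
    fun c x y ↦ by rw [hsymm, hzsmul, hsymm], fun _ _ ↦ rfl⟩

end LinearMap

section Decomposition

variable {R M N : Type*} [CommRing R] [AddCommGroup M] [Module R M] [AddCommGroup N] [Module R N]

structure IsOrthogonalDecomposition (B : M →ₗ[R] M →ₗ[R] N) (f : Module.End R M) {ι : Type*}
    (W : ι → Submodule R M) : Prop where
  iSup_eq_top : ⨆ i, W i = ⊤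
  mapsTo : ∀ i, ∀ x ∈ W i, f x ∈ W i
  orthogonal : Pairwise fun i j ↦ ∀ x ∈ W i, ∀ y ∈ W j, B x y = 0
  separatingLeft : ∀ i, (B.domRestrict₁₂ (W i) (W i)).SeparatingLeft

variable {B : M →ₗ[R] M →ₗ[R] N} {f : Module.End R M}

theorem IsOrthogonalDecomposition.isInternal {ι : Type*} [DecidableEq ι]
    {W : ι → Submodule R M} (hW : IsOrthogonalDecomposition B f W) (hB : B.IsRefl) :
    DirectSum.IsInternal W :=
  DirectSum.isInternal_submodule_of_iSupIndep_of_iSup_eq_top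
    (hB.iSupIndep_of_orthogonal hW.orthogonal hW.separatingLeft) hW.iSup_eq_top

theorem IsOrthogonalDecomposition.snoc (hB : B.IsRefl) {U V : Submodule R M}
    (hUV : Codisjoint U V) (horth : ∀ u ∈ U, ∀ v ∈ V, B u v = 0) (hUf : ∀ x ∈ U, f x ∈ U)
    (hU : (B.domRestrict₁₂ U U).SeparatingLeft) (hVf : ∀ x ∈ V, f x ∈ V) {n : ℕ}
    {W : Fin n → Submodule R V}
    (hW : IsOrthogonalDecomposition (B.domRestrict₁₂ V V) (f.restrict hVf) W) :
    IsOrthogonalDecomposition B f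
      (Fin.snoc (α := fun _ ↦ Submodule R M) (fun i ↦ (W i).map V.subtype) U) := by
  refine ⟨?_, fun i ↦ ?_, fun i j hij ↦ ?_, fun i ↦ ?_⟩
  · have hV : V = ⨆ i, (W i).map V.subtype := by
      rw [← Submodule.map_iSup, hW.iSup_eq_top, Submodule.map_top, Submodule.range_subtype]
    rw [eq_top_iff, ← hUV.eq_top]
    exact sup_le (le_iSup_of_le (Fin.last n) (by simp))
      (hV.le.trans (iSup_le fun i ↦ le_iSup_of_le i.castSucc (by simp)))
  · induction i using Fin.lastCases with
    | last => simpa using hUf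
    | cast i =>
      simp only [Fin.snoc_castSucc]
      rintro _ ⟨v, hv, rfl⟩
      exact ⟨_, hW.mapsTo i v hv, rfl⟩
  · induction i using Fin.lastCases <;> induction j using Fin.lastCases <;>
      simp only [Fin.snoc_last, Fin.snoc_castSucc]
    · exact absurd rfl hij
    · rintro x hx _ ⟨v, -, rfl⟩
      exact horth x hx v v.2
    · rintro _ ⟨v, -, rfl⟩ y hy
      exact hB _ _ (horth y hy v v.2)
    · rintro _ ⟨v, hv, rfl⟩ _ ⟨w, hw, rfl⟩
      exact hW.orthogonal (fun h ↦ hij (congrArg Fin.castSucc h)) v hv w hw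
  · induction i using Fin.lastCases with
    | last => rwa [Fin.snoc_last]
    | cast i =>
      rw [Fin.snoc_castSucc]
      exact (hW.separatingLeft i).domRestrict_map_subtype

end Decomposition

theorem ZMod.pow_smul_eq_zero {p a e : ℕ} (hae : a ≤ e) (z : ZMod (p ^ a)) : p ^ e • z = 0 := by
  rw [nsmul_eq_mul, (ZMod.natCast_eq_zero_iff _ _).2 (pow_dvd_pow p hae), zero_mul]

theorem ZMod.exists_eq_smul_of_pow_smul_eq_zero {p a e : ℕ} (hp : p ≠ 0) (ha : a = e + 1)
    {z : ZMod (p ^ a)} (hz : p ^ e • z = 0) : ∃ w, z = p • w := by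
  subst ha
  have : NeZero (p ^ (e + 1)) := ⟨pow_ne_zero _ hp⟩
  have hdvd : p ^ e * p ∣ p ^ e * z.val := by
    rw [← pow_succ, ← ZMod.natCast_eq_zero_iff]
    simpa [nsmul_eq_mul] using hz
  obtain ⟨c, hc⟩ := Nat.dvd_of_mul_dvd_mul_left (pow_pos (Nat.pos_of_ne_zero hp) e) hdvd
  exact ⟨c, by rw [← ZMod.natCast_zmod_val z, hc, nsmul_eq_mul, Nat.cast_mul]⟩

theorem ZMod.one_ne_prime_smul {p a : ℕ} (hp : p.Prime) (ha : a ≠ 0) (w : ZMod (p ^ a)) :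
    1 ≠ p • w := by
  intro h
  have hunit : IsUnit (p : ZMod (p ^ a)) := IsUnit.of_mul_eq_one w (by rw [h, nsmul_eq_mul])
  rw [ZMod.isUnit_iff_coprime, Nat.coprime_pow_right_iff (Nat.pos_of_ne_zero ha),
    Nat.coprime_self] at hunit
  exact hp.one_lt.ne' hunit

namespace AddCommGroup

variable {A : Type*} [AddCommGroup A] [Finite A] {p : ℕ}

theorem exists_addEquiv_pi_zmod_prime_pow (hp : p.Prime) {E : ℕ}
    (hexp : ∀ x : A, p ^ E • x = 0) :
    ∃ (ι : Type) (_ : Fintype ι) (a : ι → ℕ), (∀ i, a i ≠ 0 ∧ a i ≤ E) ∧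
      Nonempty (A ≃+ ∀ i, ZMod (p ^ a i)) := by
  classical
  obtain ⟨ι, _, n, hn, ⟨σ⟩⟩ := equiv_directSum_zmod_of_finite' A
  let τ := σ.trans (DirectSum.linearEquivFunOnFintype ℤ ι _).toAddEquiv
  have hdvd (i : ι) : n i ∣ p ^ E := by
    have := congr_fun (congrArg τ (hexp (τ.symm (Pi.single i 1)))) i
    rw [← ZMod.natCast_eq_zero_iff, Nat.cast_pow]
    simpa [nsmul_eq_mul] using this
  choose a hle ha using fun i ↦ (Nat.dvd_prime_pow hp).1 (hdvd i)
  obtain rfl : n = fun i ↦ p ^ a i := funext ha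
  refine ⟨ι, inferInstance, a, fun i ↦ ⟨fun h ↦ ?_, hle i⟩, ⟨τ⟩⟩
  simpa [h] using hn i

theorem exists_addEquiv_fin_zmod_of_forall_pow_smul_eq_zero (hp : p.Prime) {e : ℕ}
    (hexp : ∀ x : A, p ^ (e + 1) • x = 0) (hdiv : ∀ x : A, p ^ e • x = 0 → ∃ y, x = p • y) :
    ∃ n, Nonempty (A ≃+ (Fin n → ZMod (p ^ (e + 1)))) := by
  classical
  obtain ⟨ι, _, a, ha, ⟨τ⟩⟩ := exists_addEquiv_pi_zmod_prime_pow hp hexp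
  have htop (i : ι) : a i = e + 1 := by
    refine (ha i).2.antisymm (Nat.succ_le_of_lt (lt_of_not_ge fun hle ↦ ?_))
    have hsingle : p ^ e • (Pi.single i 1 : ∀ j, ZMod (p ^ a j)) = 0 := by
      ext j
      rcases eq_or_ne j i with rfl | hj
      · simp [ZMod.pow_smul_eq_zero hle]
      · simp [hj]
    obtain ⟨y, hy⟩ := hdiv (τ.symm (Pi.single i 1)) (by rw [← map_nsmul, hsingle, map_zero])
    have := congr_fun (congrArg τ hy) i
    simp only [AddEquiv.apply_symm_apply, map_nsmul, Pi.smul_apply, Pi.single_eq_same] at this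
    exact ZMod.one_ne_prime_smul hp (ha i).1 _ this
  obtain rfl : a = fun _ ↦ e + 1 := funext htop
  exact ⟨_, ⟨τ.trans (LinearEquiv.funCongrLeft ℤ _ (Fintype.equivFin ι).symm).toAddEquiv⟩⟩

end AddCommGroup

theorem commute_sum_range_pow_mul_mul_pow {R : Type*} [Ring R] {u v : R} {m : ℕ}
    (hvu : v * u = 1) (hu : u ^ m = 1) (hv : v ^ m = 1) (a : R) :
    Commute u (∑ k ∈ Finset.range m, u ^ k * a * v ^ k) := by
  set g : ℕ → R := fun k ↦ u ^ k * a * v ^ k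
  have hstep (k : ℕ) : u * g k = g (k + 1) * u := by
    simp only [g]
    rw [pow_succ' u, pow_succ v]
    simp only [mul_assoc, hvu, mul_one]
  have hshift : ∑ k ∈ Finset.range m, g (k + 1) = ∑ k ∈ Finset.range m, g k := by
    have hperiod : g m = g 0 := by simp [g, hu, hv]
    have := (Finset.sum_range_succ' g m).symm.trans (Finset.sum_range_succ g m)
    rwa [hperiod, add_left_inj] at this
  show u * ∑ k ∈ Finset.range m, g k = (∑ k ∈ Finset.range m, g k) * u
  simp_rw [Finset.mul_sum, hstep, ← Finset.sum_mul, hshift]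

theorem Commute.apply_mem_iInf_range_pow {R M : Type*} [Semiring R] [AddCommMonoid M]
    [Module R M] {g ψ : Module.End R M} (h : Commute g ψ) {x : M}
    (hx : x ∈ ⨅ n, LinearMap.range (ψ ^ n)) : g x ∈ ⨅ n, LinearMap.range (ψ ^ n) := by
  refine Submodule.mem_iInf _ |>.2 fun n ↦ ?_
  obtain ⟨y, rfl⟩ := (Submodule.mem_iInf _).1 hx n
  exact ⟨g y, by rw [← Module.End.mul_apply, ← (h.pow_right n).eq, Module.End.mul_apply]⟩

section TopProjection

variable {T : Type*} [AddCommGroup T] {p e : ℕ}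

/-- `π` is the identity modulo `T[p ^ e]` and maps `T[p ^ e]` into `p T`. When `p ^ (e + 1) T = 0`,
the projection onto the cyclic summands of order `p ^ (e + 1)` of a decomposition of `T` is one. -/
structure IsTopProjection (p e : ℕ) (π : Module.End ℤ T) : Prop where
  pow_smul_apply : ∀ x, p ^ e • π x = p ^ e • x
  exists_eq_smul : ∀ x, p ^ e • x = 0 → ∃ y, π x = p • y

theorem exists_isTopProjection [Finite T] (hp : p.Prime) (hexp : ∀ x : T, p ^ (e + 1) • x = 0) :
    ∃ π : Module.End ℤ T, IsTopProjection p e π := by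
  classical
  obtain ⟨ι, _, a, ha, ⟨τ⟩⟩ := AddCommGroup.exists_addEquiv_pi_zmod_prime_pow hp hexp
  let P : (∀ i, ZMod (p ^ a i)) →ₗ[ℤ] ∀ i, ZMod (p ^ a i) :=
    LinearMap.pi fun i ↦ if a i = e + 1 then LinearMap.proj i else 0
  have hP (z : ∀ i, ZMod (p ^ a i)) (i : ι) : P z i = if a i = e + 1 then z i else 0 := by
    by_cases h : a i = e + 1 <;> simp [P, h]
  refine ⟨τ.toIntLinearEquiv.symm.toLinearMap ∘ₗ P ∘ₗ τ.toIntLinearEquiv.toLinearMap,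
    ⟨fun x ↦ τ.injective ?_, fun x hx ↦ ?_⟩⟩
  · ext i
    have hle : a i ≠ e + 1 → a i ≤ e := fun h ↦ Nat.le_of_lt_succ ((ha i).2.lt_of_ne h)
    by_cases h : a i = e + 1 <;> simp [hP, h, ZMod.pow_smul_eq_zero (hle _)]
  · have hcoord (i : ι) : ∃ w, P (τ x) i = p • w := by
      by_cases h : a i = e + 1
      · refine ZMod.exists_eq_smul_of_pow_smul_eq_zero hp.ne_zero h (z := τ x i) ?_ |>.imp
          fun w hw ↦ by rw [hP, if_pos h, hw]
        simpa using congr_fun (congrArg τ hx) i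
      · exact ⟨0, by rw [hP, if_neg h, smul_zero]⟩
    choose w hw using hcoord
    refine ⟨τ.symm w, ?_⟩
    rw [← map_nsmul, show p • w = P (τ x) from (funext hw).symm]
    simp

theorem IsTopProjection.conj {π : Module.End ℤ T} (hπ : IsTopProjection p e π)
    {u v : Module.End ℤ T} (huv : u * v = 1) : IsTopProjection p e (u * π * v) := by
  have huv' (x : T) : u (v x) = x := by rw [← Module.End.mul_apply, huv, Module.End.one_apply]
  refine ⟨fun x ↦ ?_, fun x hx ↦ ?_⟩
  · simp only [Module.End.mul_apply, ← map_nsmul, hπ.pow_smul_apply, huv']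
  · obtain ⟨y, hy⟩ := hπ.exists_eq_smul (v x) (by rw [← map_nsmul, hx, map_zero])
    exact ⟨u y, by simp only [Module.End.mul_apply, hy, map_nsmul]⟩

theorem IsTopProjection.exists_commute {π : Module.End ℤ T} (hπ : IsTopProjection p e π)
    (hp : p.Prime) (hexp : ∀ x : T, p ^ (e + 1) • x = 0) {m : ℕ} (hpm : ¬p ∣ m)
    {f : Module.End ℤ T} (hf : f ^ m = 1) :
    ∃ ψ : Module.End ℤ T, IsTopProjection p e ψ ∧ Commute f ψ := by
  have hm : m ≠ 0 := by rintro rfl; exact hpm (dvd_zero p)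
  set g := f ^ (m - 1)
  have hgf : g * f = 1 := by rw [pow_sub_one_mul hm, hf]
  have hfg (k : ℕ) : f ^ k * g ^ k = 1 := by
    rw [← ((Commute.refl f).pow_right (m - 1)).mul_pow, mul_pow_sub_one hm, hf, one_pow]
  have hg : g ^ m = 1 := by rw [← pow_mul, mul_comm, pow_mul, hf, one_pow]
  set σ := ∑ k ∈ Finset.range m, f ^ k * π * g ^ k
  have hconj (k : ℕ) := hπ.conj (hfg k)
  have hσ₁ (x : T) : p ^ e • σ x = m • p ^ e • x := by
    simp only [σ, LinearMap.sum_apply, Finset.smul_sum, (hconj _).pow_smul_apply,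
      Finset.sum_const, Finset.card_range]
  have hσ₂ (x : T) (hx : p ^ e • x = 0) : ∃ y, σ x = p • y := by
    choose y hy using fun k ↦ (hconj k).exists_eq_smul x hx
    exact ⟨∑ k ∈ Finset.range m, y k, by simp [σ, LinearMap.sum_apply, Finset.smul_sum, hy]⟩
  -- `k₀` only inverts `m` modulo `p`, which suffices because `p • p ^ e • x = 0`.
  obtain ⟨k₀, -, hk₀⟩ := Nat.exists_mul_mod_eq_one_of_coprime
    (Nat.coprime_comm.1 ((Nat.Prime.coprime_iff_not_dvd hp).2 hpm)) hp.one_lt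
  refine ⟨k₀ • σ, ⟨fun x ↦ ?_, fun x hx ↦ ?_⟩, ?_⟩
  · have hpx : p • p ^ e • x = 0 := by rw [smul_smul, ← pow_succ', hexp]
    rw [LinearMap.smul_apply, smul_comm, hσ₁, smul_smul, mul_comm, nsmul_eq_mod_nsmul _ hpx, hk₀,
      one_smul]
  · obtain ⟨y, hy⟩ := hσ₂ x hx
    exact ⟨k₀ • y, by rw [LinearMap.smul_apply, hy, smul_comm]⟩
  · exact (commute_sum_range_pow_mul_mul_pow hgf hf hg π).smul_right k₀

variable {ψ : Module.End ℤ T}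

theorem IsTopProjection.pow_smul_pow_apply (hψ : IsTopProjection p e ψ) (n : ℕ) (x : T) :
    p ^ e • (ψ ^ n) x = p ^ e • x := by
  induction n with
  | zero => rfl
  | succ n ih => rw [pow_succ', Module.End.mul_apply, hψ.pow_smul_apply, ih]

variable [Finite T]

theorem IsTopProjection.exists_mem_iInf_range_pow (hψ : IsTopProjection p e ψ) (t : T) :
    ∃ u ∈ ⨅ n, LinearMap.range (ψ ^ n), p ^ e • u = p ^ e • t := by
  have := isArtinian_of_finite (R := ℤ) (M := T)
  obtain ⟨N, hN⟩ := (LinearMap.eventually_iInf_range_pow_eq ψ).exists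
  exact ⟨(ψ ^ N) t, hN ▸ LinearMap.mem_range_self _ t, hψ.pow_smul_pow_apply N t⟩

/-- For large `N`, `ψ ^ (N + 1)` is injective on `U = range ψ ^ N`, so `u = ψ ^ N (ψ w)` with
`w ∈ U ∩ T[p ^ e]`, and `ψ w ∈ p T`. -/
theorem IsTopProjection.exists_eq_smul_of_mem_iInf_range_pow (hψ : IsTopProjection p e ψ)
    {u : T} (hu : u ∈ ⨅ n, LinearMap.range (ψ ^ n)) (hu₀ : p ^ e • u = 0) :
    ∃ w ∈ ⨅ n, LinearMap.range (ψ ^ n), u = p • w := by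
  have := isArtinian_of_finite (R := ℤ) (M := T)
  obtain ⟨N, hN⟩ := Filter.eventually_atTop.1
    ((LinearMap.eventually_iInf_range_pow_eq ψ).and ψ.eventually_disjoint_ker_pow_range_pow)
  have hU (k : ℕ) (hk : N ≤ k) := (hN k hk).1
  obtain ⟨v, rfl⟩ : u ∈ LinearMap.range (ψ ^ (N + 1 + N)) := hU (N + 1 + N) (by omega) ▸ hu
  have hsplit (x : T) : (ψ ^ (N + 1 + N)) x = (ψ ^ N) (ψ ((ψ ^ N) x)) := by
    rw [pow_add, pow_succ, Module.End.mul_apply, Module.End.mul_apply]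
  have hw : p ^ e • (ψ ^ N) v = 0 := by
    refine Submodule.disjoint_def.1 (hN (N + 1) (by omega)).2 _ ?_ ?_
    · rw [LinearMap.mem_ker, map_nsmul, ← Module.End.mul_apply, ← pow_add, hu₀]
    · rw [← hU (N + 1) (by omega), hU N le_rfl]
      exact nsmul_mem (LinearMap.mem_range_self _ v) _
  obtain ⟨y, hy⟩ := hψ.exists_eq_smul _ hw
  exact ⟨(ψ ^ N) y, hU N le_rfl ▸ LinearMap.mem_range_self _ y, by rw [hsplit, hy, map_nsmul]⟩

end TopProjection

section TopLayer

variable {T : Type*} [AddCommGroup T] {p e : ℕ} {U : Submodule ℤ T}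

theorem Submodule.exists_eq_pow_smul_of_pow_smul_ne_zero (hexp : ∀ x : T, p ^ (e + 1) • x = 0)
    (hdiv : ∀ u ∈ U, p ^ e • u = 0 → ∃ w ∈ U, u = p • w) {u : T} (hu : u ∈ U) (hu₀ : u ≠ 0) :
    ∃ k ≤ e, ∃ w ∈ U, p ^ e • w ≠ 0 ∧ u = p ^ k • w := by
  classical
  let P k := ∃ w ∈ U, u = p ^ k • w
  obtain ⟨w, hw, hwu⟩ : P (Nat.findGreatest P e) :=
    Nat.findGreatest_spec (Nat.zero_le e) ⟨u, hu, by rw [pow_zero, one_smul]⟩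
  refine ⟨_, Nat.findGreatest_le e, w, hw, fun hw₀ ↦ ?_, hwu⟩
  obtain ⟨w', hw', rfl⟩ := hdiv w hw hw₀
  rw [hwu, smul_smul, ← pow_succ] at hu₀
  by_cases hK : Nat.findGreatest P e + 1 ≤ e
  · exact Nat.findGreatest_is_greatest (Nat.lt_succ_self _) hK
      ⟨w', hw', by rw [hwu, pow_succ, mul_smul]⟩
  · rw [show Nat.findGreatest P e = e by have := Nat.findGreatest_le (P := P) e; omega] at hu₀
    exact hu₀ (hexp w')

variable {N : Type*} [AddCommGroup N] {B : T →ₗ[ℤ] T →ₗ[ℤ] N}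

theorem separatingLeft_domRestrict_of_pow_smul (hsep : B.SeparatingLeft)
    (hexp : ∀ x : T, p ^ (e + 1) • x = 0) (hdiv : ∀ u ∈ U, p ^ e • u = 0 → ∃ w ∈ U, u = p • w)
    (htop : ∀ t, ∃ u ∈ U, p ^ e • u = p ^ e • t) : (B.domRestrict₁₂ U U).SeparatingLeft := by
  rintro ⟨u, hu⟩ hBu
  by_contra hne
  obtain ⟨k, hk, w, hw, hw₀, rfl⟩ := U.exists_eq_pow_smul_of_pow_smul_ne_zero hexp hdiv hu
    fun h ↦ hne (Subtype.ext h)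
  obtain ⟨y, hy⟩ : ∃ y, B (p ^ e • w) y ≠ 0 := by
    by_contra! h
    exact hw₀ (hsep _ h)
  obtain ⟨v, hv, hvy⟩ := htop y
  apply hy
  calc B (p ^ e • w) y = B w (p ^ e • v) := by
        rw [hvy, map_nsmul, map_nsmul, LinearMap.smul_apply]
    _ = p ^ (e - k) • B (p ^ k • w) v := by
      rw [map_nsmul, map_nsmul, LinearMap.smul_apply, smul_smul, ← pow_add, Nat.sub_add_cancel hk]
    _ = 0 := by rw [show B (p ^ k • w) v = 0 from hBu ⟨v, hv⟩, smul_zero]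

theorem LinearMap.IsRefl.pow_smul_eq_zero_of_mem_orthogonalBilin (hB : B.IsRefl)
    (hsep : B.SeparatingLeft) (htop : ∀ t, ∃ u ∈ U, p ^ e • u = p ^ e • t) {x : T}
    (hx : x ∈ U.orthogonalBilin B) : p ^ e • x = 0 := by
  refine hsep _ fun y ↦ hB _ _ ?_
  obtain ⟨u, hu, huy⟩ := htop y
  rw [map_nsmul, ← LinearMap.smul_apply, ← map_nsmul, ← huy, map_nsmul, LinearMap.smul_apply,
    hx u hu, smul_zero]

theorem exists_homocyclic_summand_orthogonalBilin [Finite T] {m : ℕ} (hp : p.Prime)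
    (hpm : ¬p ∣ m) (hexp : ∀ x : T, p ^ (e + 1) • x = 0) (hB : B.IsRefl)
    (hsep : B.SeparatingLeft) {f : Module.End ℤ T} (hf : f ^ m = 1) :
    ∃ U : Submodule ℤ T, (∀ x ∈ U, f x ∈ U) ∧ U ≤ U.map f ∧
      (B.domRestrict₁₂ U U).SeparatingLeft ∧
      (∃ n, Nonempty (U ≃+ (Fin n → ZMod (p ^ (e + 1))))) ∧
      ∀ x ∈ U.orthogonalBilin B, p ^ e • x = 0 := by
  have hm : m ≠ 0 := by rintro rfl; exact hpm (dvd_zero p)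
  obtain ⟨π, hπ⟩ := exists_isTopProjection hp hexp
  obtain ⟨ψ, hψ, hfψ⟩ := hπ.exists_commute hp hexp hpm hf
  have htop := hψ.exists_mem_iInf_range_pow
  have hdiv (u : T) := hψ.exists_eq_smul_of_mem_iInf_range_pow (u := u)
  refine ⟨⨅ n, LinearMap.range (ψ ^ n), fun x hx ↦ hfψ.apply_mem_iInf_range_pow hx,
    fun x hx ↦ ⟨(f ^ (m - 1)) x, (hfψ.pow_left _).apply_mem_iInf_range_pow hx, ?_⟩,
    separatingLeft_domRestrict_of_pow_smul hsep hexp hdiv htop, ?_,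
    fun x hx ↦ hB.pow_smul_eq_zero_of_mem_orthogonalBilin hsep htop hx⟩
  · rw [← Module.End.mul_apply, mul_pow_sub_one hm, hf, Module.End.one_apply]
  · refine AddCommGroup.exists_addEquiv_fin_zmod_of_forall_pow_smul_eq_zero hp
      (fun x ↦ Subtype.ext (hexp x)) fun x hx ↦ ?_
    obtain ⟨w, hw, hxw⟩ := hdiv x x.2 (congrArg Subtype.val hx)
    exact ⟨⟨w, hw⟩, Subtype.ext hxw⟩

end TopLayer

theorem exists_isOrthogonalDecomposition_homocyclic {p m : ℕ} (hp : p.Prime) (hpm : ¬p ∣ m)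
    (e : ℕ) {T : Type*} [AddCommGroup T] [Finite T] (B : T →ₗ[ℤ] T →ₗ[ℤ] AddCircle (1 : ℚ))
    (hB : B.IsRefl) (hsep : B.SeparatingLeft) (f : Module.End ℤ T) (hf : f ^ m = 1)
    (hfB : ∀ x y, B (f x) (f y) = B x y) (hexp : ∀ x : T, p ^ e • x = 0) :
    ∃ W : Fin e → Submodule ℤ T, IsOrthogonalDecomposition B f W ∧
      ∀ i, ∃ n, Nonempty (W i ≃+ (Fin n → ZMod (p ^ (i.1 + 1)))) := by
  induction e generalizing T with
  | zero =>
    refine ⟨Fin.elim0, ⟨eq_top_iff.2 fun x _ ↦ ?_, fun i ↦ i.elim0, fun i ↦ i.elim0,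
      fun i ↦ i.elim0⟩, fun i ↦ i.elim0⟩
    rw [show x = 0 by simpa using hexp x]
    exact zero_mem _
  | succ e ih =>
    obtain ⟨U, hUf, hUmap, hU, hUiso, hVexp⟩ :=
      exists_homocyclic_summand_orthogonalBilin hp hpm hexp hB hsep hf
    set V := U.orthogonalBilin B
    have hUV := hB.isCompl_orthogonalBilin hU
    have hVf := LinearMap.orthogonalBilin_mapsTo hfB hUmap
    obtain ⟨W, hW, hWiso⟩ := ih (B.domRestrict₁₂ V V) (hB.domRestrict V)
      (hB.separatingLeft_domRestrict_orthogonalBilin hsep hUV.codisjoint) (f.restrict hVf)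
      (by ext x; simp [Module.End.pow_restrict, hf]) (fun x y ↦ hfB x y)
      (fun x ↦ Subtype.ext (hVexp x x.2))
    refine ⟨_, hW.snoc hB hUV.codisjoint (fun u hu v hv ↦ hv u hu) hUf hU hVf, fun i ↦ ?_⟩
    induction i using Fin.lastCases with
    | last => rwa [Fin.snoc_last]
    | cast i =>
      rw [Fin.snoc_castSucc]
      obtain ⟨n, ⟨σ⟩⟩ := hWiso i
      exact ⟨n, ⟨(Submodule.equivMapOfInjective _ V.injective_subtype _).symm.toAddEquiv.trans σ⟩⟩

theorem stmt3_general (p : ℕ) (hp : p.Prime)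
    (m : ℕ) (hpm : ¬ p ∣ m)
    (T : Type) [AddCommGroup T] [Finite T]
    (hcard : ∃ j : ℕ, Nat.card T = p ^ j)
    (lk : T → T → AddCircle (1 : ℚ))
    (hadd : ∀ x y z : T, lk (x + y) z = lk x z + lk y z)
    (hsymm : ∀ x y : T, lk x y = lk y x)
    (hnd : ∀ x : T, x ≠ 0 → ∃ y : T, lk x y ≠ 0)
    (φ : AddAut T) (hφm : m • φ = 0)
    (hφiso : ∀ x y : T, lk (φ x) (φ y) = lk x y) :
    ∃ (N : ℕ) (Tsub : Fin N → Submodule ℤ T),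
      DirectSum.IsInternal Tsub ∧
      (∀ i : Fin N, ∀ x ∈ Tsub i, φ x ∈ Tsub i) ∧
      (∀ i j : Fin N, i ≠ j → ∀ x ∈ Tsub i, ∀ y ∈ Tsub j, lk x y = 0) ∧
      (∀ i : Fin N, ∃ ni : ℕ,
        Nonempty ((Tsub i) ≃+ (Fin ni → ZMod (p ^ (i.1 + 1))))) := by
  obtain ⟨j, hj⟩ := hcard
  obtain ⟨B, hBlk⟩ := LinearMap.exists_eq_of_map_add_left_of_symm lk hadd hsymm
  have hB : B.IsRefl := fun x y h ↦ by rwa [hBlk, hsymm, ← hBlk]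
  have hsep : B.SeparatingLeft := fun x hx ↦ by
    by_contra hne
    obtain ⟨y, hy⟩ := hnd x hne
    exact hy (hBlk x y ▸ hx y)
  let f : Module.End ℤ T := φ.toIntLinearEquiv.toLinearMap
  -- `+` on `AddAut T` is composition, so `hφm` says that `φ ^ m` is the identity.
  have hf_pow (k : ℕ) (x : T) : (f ^ k) x = (k • φ) x := by
    induction k with
    | zero => rfl
    | succ k ih => rw [pow_succ', Module.End.mul_apply, ih, succ_nsmul']; rfl
  have hf : f ^ m = 1 := LinearMap.ext fun x ↦ by rw [hf_pow, hφm]; rfl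
  obtain ⟨W, hW, hWiso⟩ := exists_isOrthogonalDecomposition_homocyclic hp hpm j B hB hsep f hf
    (fun x y ↦ by simp only [hBlk]; exact hφiso x y) fun x ↦ hj ▸ card_nsmul_eq_zero'
  exact ⟨j, W, hW.isInternal hB, hW.mapsTo,
    fun i j hij x hx y hy ↦ hBlk x y ▸ hW.orthogonal hij x hx y hy, hWiso⟩

theorem stmt3 (p : ℕ) (hp : p.Prime) (hp2 : p ≠ 2)
    (m : ℕ) (hm : 0 < m) (hpm : ¬ p ∣ m)
    (T : Type) [AddCommGroup T] [Finite T]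
    (hcard : ∃ j : ℕ, Nat.card T = p ^ j)
    (lk : T → T → AddCircle (1 : ℚ))
    (hadd : ∀ x y z : T, lk (x + y) z = lk x z + lk y z)
    (hsymm : ∀ x y : T, lk x y = lk y x)
    (hnd : ∀ x : T, x ≠ 0 → ∃ y : T, lk x y ≠ 0)
    (φ : AddAut T) (hφm : m • φ = 0)
    (hφiso : ∀ x y : T, lk (φ x) (φ y) = lk x y) :
    ∃ (N : ℕ) (Tsub : Fin N → Submodule ℤ T),
      DirectSum.IsInternal Tsub ∧
      (∀ i : Fin N, ∀ x ∈ Tsub i, φ x ∈ Tsub i) ∧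
      (∀ i j : Fin N, i ≠ j → ∀ x ∈ Tsub i, ∀ y ∈ Tsub j, lk x y = 0) ∧
      (∀ i : Fin N, ∃ ni : ℕ,
        Nonempty ((Tsub i) ≃+ (Fin ni → ZMod (p ^ (i.1 + 1))))) :=
  stmt3_general p hp m hpm T hcard lk hadd hsymm hnd φ hφm hφiso
end

section
/- Let p be an odd prime, k ≥ 1 and n ≥ 1, and let B be a p^k-form of rank n with mod-p reduction B_red. Then the mod-p reduction homomorphism π : O(B) → O(B_red) is surjective, and its kernel has exactly p^{(k−1)·n(n−1)/2} elements. -/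
open Matrix

variable {ι : Type*} [Fintype ι] [DecidableEq ι] {R : Type*} [CommRing R]

/-- The orthogonal group of a bilinear form given by the matrix `B`:
the subgroup of invertible matrices `A` with `Aᵀ * B * A = B`. -/
def OGroup (B : Matrix ι ι R) : Subgroup (Matrix ι ι R)ˣ where
  carrier := {A | ((A : (Matrix ι ι R)ˣ) : Matrix ι ι R)ᵀ * B * A = B}
  one_mem' := by simp
  mul_mem' := by
    intro a b ha hb
    simp only [Set.mem_setOf_eq, Units.val_mul, Matrix.transpose_mul] at *
    calc ((b : Matrix ι ι R)ᵀ * (a : Matrix ι ι R)ᵀ) * B * ((a : Matrix ι ι R) * (b : Matrix ι ι R))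
        = (b : Matrix ι ι R)ᵀ * ((a : Matrix ι ι R)ᵀ * B * (a : Matrix ι ι R)) * (b : Matrix ι ι R) := by
          simp only [Matrix.mul_assoc]
      _ = B := by rw [ha]; exact hb
  inv_mem' := by
    intro a ha
    simp only [Set.mem_setOf_eq] at *
    have h1 : ((a⁻¹ : (Matrix ι ι R)ˣ) : Matrix ι ι R)ᵀ * ((a : Matrix ι ι R)ᵀ * B * (a : Matrix ι ι R)) * ((a⁻¹ : (Matrix ι ι R)ˣ) : Matrix ι ι R) = B := by
      calc ((a⁻¹ : (Matrix ι ι R)ˣ) : Matrix ι ι R)ᵀ * ((a : Matrix ι ι R)ᵀ * B * (a : Matrix ι ι R)) * ((a⁻¹ : (Matrix ι ι R)ˣ) : Matrix ι ι R)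
          = ((a : Matrix ι ι R) * ((a⁻¹ : (Matrix ι ι R)ˣ) : Matrix ι ι R))ᵀ * B * ((a : Matrix ι ι R) * ((a⁻¹ : (Matrix ι ι R)ˣ) : Matrix ι ι R)) := by
            simp only [Matrix.transpose_mul, Matrix.mul_assoc]
        _ = B := by
            rw [← Units.val_mul, mul_inv_cancel]
            simp
    rw [ha] at h1
    exact h1

lemma mem_OGroup_map {S : Type*} [CommRing S] (g : R →+* S)
    (B : Matrix ι ι R) (x : (Matrix ι ι R)ˣ) (hx : x ∈ OGroup B) :
    Units.map (g.mapMatrix : Matrix ι ι R →+* Matrix ι ι S).toMonoidHom x ∈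
      OGroup (B.map g) := by
  have hx' : ((x : Matrix ι ι R))ᵀ * B * (x : Matrix ι ι R) = B := hx
  have h2 : ((x : Matrix ι ι R)ᵀ * B * (x : Matrix ι ι R)).map g = B.map g := by rw [hx']
  show (((x : Matrix ι ι R).map g)ᵀ) * B.map g * ((x : Matrix ι ι R).map g) = B.map g
  rw [← Matrix.transpose_map, ← Matrix.map_mul, ← Matrix.map_mul]
  exact h2

/-- Mod-`p` reduction homomorphism `O(B) → O(B_red)`. -/
def redPi (p k : ℕ) (hk : k ≠ 0) {n : ℕ} (B : Matrix (Fin n) (Fin n) (ZMod (p ^ k))) :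
    OGroup B →* OGroup (B.map (ZMod.castHom (dvd_pow_self p hk) (ZMod p))) :=
  MonoidHom.codRestrict
    ((Units.map ((ZMod.castHom (dvd_pow_self p hk) (ZMod p)).mapMatrix :
        Matrix (Fin n) (Fin n) (ZMod (p ^ k)) →+* Matrix (Fin n) (Fin n) (ZMod p)).toMonoidHom).comp
      (OGroup B).subtype)
    (OGroup (B.map (ZMod.castHom (dvd_pow_self p hk) (ZMod p))))
    (fun x => mem_OGroup_map _ B x x.2)

/-!
Reduction modulo `p` has nilpotent kernel and `2` is a unit in `ℤ/p^kℤ`. Surjectivity is Hensel's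
lemma for the isometry equation: if `Aᵀ B A - B = C ≡ 0 mod pʲ`, then `A (1 - ½ B⁻¹ C)` is an
isometry modulo `p^(j+1)`. On the kernel, the Cayley transform `A ↦ (1 - A)(1 + A)⁻¹` is a
bijection onto the matrices `T ≡ 0 mod p` with `Tᵀ B + B T = 0`, and `T ↦ B T` identifies these
with the skew-symmetric matrices with entries in `pℤ/p^kℤ`. Such a matrix is free above the
diagonal, so there are `(p^(k-1))^(n(n-1)/2)` of them.
-/

namespace Ideal

variable {I J : Ideal R} {M N : Matrix ι ι R}

theorem mul_mem_matrix_mul (hM : M ∈ I.matrix ι) (hN : N ∈ J.matrix ι) :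
    M * N ∈ (I * J).matrix ι :=
  (mem_matrix _ _ _).2 fun i j => _root_.sum_mem fun l _ => mul_mem_mul (hM i l) (hN l j)

theorem mul_mem_matrix_right (N : Matrix ι ι R) (hM : M ∈ I.matrix ι) :
    M * N ∈ I.matrix ι := by
  simpa only [mul_top] using
    mul_mem_matrix_mul hM (show N ∈ (⊤ : Ideal R).matrix ι by simp [matrix_top])

theorem transpose_mem_matrix (hM : M ∈ I.matrix ι) : Mᵀ ∈ I.matrix ι :=
  (mem_matrix _ _ _).2 fun i j => hM j i

end Ideal

theorem Matrix.map_eq_map_iff_sub_mem_matrix {S : Type*} [CommRing S] (f : R →+* S)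
    {M N : Matrix ι ι R} : M.map f = N.map f ↔ M - N ∈ (RingHom.ker f).matrix ι := by
  simp only [Ideal.mem_matrix, RingHom.mem_ker, sub_apply, map_sub, sub_eq_zero, ← Matrix.ext_iff,
    map_apply]

theorem IsNilpotent.isUnit_det_of_sub_mem_matrix {I : Ideal R} (hI : IsNilpotent I)
    {M N : Matrix ι ι R} (hN : IsUnit N.det) (h : M - N ∈ I.matrix ι) : IsUnit M.det := by
  have hmap := (map_eq_map_iff_sub_mem_matrix (Ideal.Quotient.mk I)).2 (by rwa [Ideal.mk_ker])
  rw [← hI.isUnit_quotient_mk_iff, RingHom.map_det, RingHom.mapMatrix_apply, hmap,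
    ← RingHom.mapMatrix_apply, ← RingHom.map_det]
  exact hN.map _

theorem Matrix.isUnit_det_of_transpose_mul_mul_eq {A B : Matrix ι ι R} (hdet : IsUnit B.det)
    (hA : Aᵀ * B * A = B) : IsUnit A.det := by
  have h := congrArg det hA
  rw [det_mul, det_mul, det_transpose] at h
  exact isUnit_of_mul_isUnit_right (h ▸ hdet)

namespace Matrix

noncomputable def cayley (A : Matrix ι ι R) : Matrix ι ι R :=
  (1 - A) * (1 + A)⁻¹

variable {A : Matrix ι ι R}

theorem one_add_cayley (h : IsUnit (1 + A).det) : 1 + cayley A = (2 : R) • (1 + A)⁻¹ := by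
  calc 1 + cayley A = ((1 + A) + (1 - A)) * (1 + A)⁻¹ := by
        rw [Matrix.add_mul, mul_nonsing_inv _ h, cayley]
    _ = (2 : R) • (1 + A)⁻¹ := by
        rw [add_add_sub_cancel, ← two_smul R, Matrix.smul_mul, Matrix.one_mul]

theorem one_sub_cayley (h : IsUnit (1 + A).det) :
    1 - cayley A = (2 : R) • (A * (1 + A)⁻¹) := by
  calc 1 - cayley A = ((1 + A) - (1 - A)) * (1 + A)⁻¹ := by
        rw [Matrix.sub_mul, mul_nonsing_inv _ h, cayley]
    _ = (2 : R) • (A * (1 + A)⁻¹) := by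
        rw [add_sub_sub_cancel, ← two_smul R, Matrix.smul_mul]

theorem cayley_cayley (h2 : IsUnit (2 : R)) (h : IsUnit (1 + A).det) :
    cayley (cayley A) = A := by
  have hinv : (1 + cayley A)⁻¹ = (↑h2.unit⁻¹ : R) • (1 + A) := by
    apply inv_eq_right_inv
    rw [one_add_cayley h, Matrix.smul_mul, Matrix.mul_smul, nonsing_inv_mul _ h, smul_smul,
      IsUnit.mul_val_inv, one_smul]
  rw [cayley, one_sub_cayley h, hinv, Matrix.smul_mul, Matrix.mul_smul, smul_smul,
    IsUnit.mul_val_inv, one_smul, Matrix.mul_assoc, nonsing_inv_mul _ h, Matrix.mul_one]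

theorem transpose_mul_mul_eq_iff_isSkewAdjoint_cayley (B : Matrix ι ι R) (h2 : IsUnit (2 : R))
    (h : IsUnit (1 + A).det) : Aᵀ * B * A = B ↔ B.IsSkewAdjoint (cayley A) := by
  rw [Matrix.IsSkewAdjoint, IsAdjointPair, mul_neg, eq_neg_iff_add_eq_zero]
  have hT : cayley A * (1 + A) = 1 - A := by
    rw [cayley, Matrix.mul_assoc, nonsing_inv_mul _ h, Matrix.mul_one]
  have hTt : (1 + A)ᵀ * (cayley A)ᵀ = 1 - Aᵀ := by
    rw [← transpose_mul, hT, transpose_sub, transpose_one]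
  have key : (1 + A)ᵀ * ((cayley A)ᵀ * B + B * cayley A) * (1 + A) =
      (2 : R) • (B - Aᵀ * B * A) :=
    calc (1 + A)ᵀ * ((cayley A)ᵀ * B + B * cayley A) * (1 + A)
        = ((1 + A)ᵀ * (cayley A)ᵀ) * B * (1 + A) + (1 + A)ᵀ * B * (cayley A * (1 + A)) := by
          noncomm_ring
      _ = (2 : R) • (B - Aᵀ * B * A) := by
          rw [hTt, hT, transpose_add, transpose_one, two_smul]
          noncomm_ring
  have hAt : IsUnit (1 + A)ᵀ := (isUnit_iff_isUnit_det _).2 (by rwa [det_transpose])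
  have hA : IsUnit (1 + A) := (isUnit_iff_isUnit_det _).2 h
  rw [← hAt.mul_right_eq_zero, ← hA.mul_left_eq_zero, key, h2.smul_eq_zero, sub_eq_zero,
    eq_comm]

variable {I : Ideal R} {B : Matrix ι ι R}

theorem exists_transpose_mul_mul_sub_mem_pow_succ (h2 : IsUnit (2 : R)) (hB : Bᵀ = B)
    (hdet : IsUnit B.det) {j : ℕ} (hj : j ≠ 0) {A : Matrix ι ι R}
    (hA : Aᵀ * B * A - B ∈ (I ^ j).matrix ι) :
    ∃ A', A' - A ∈ (I ^ j).matrix ι ∧ A'ᵀ * B * A' - B ∈ (I ^ (j + 1)).matrix ι := by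
  set C := Aᵀ * B * A - B
  set c : R := ↑h2.unit⁻¹
  set H := c • B⁻¹
  set Y := -(H * C)
  have hC : Cᵀ = C := by
    simp only [C, transpose_sub, transpose_mul, transpose_transpose, hB, Matrix.mul_assoc]
  have hYt : Yᵀ = -(C * H) := by
    simp only [Y, H, transpose_neg, transpose_mul, transpose_smul, transpose_nonsing_inv, hB, hC,
      Matrix.mul_smul, Matrix.smul_mul]
  have hHB : H * B = c • 1 := by rw [Matrix.smul_mul, nonsing_inv_mul _ hdet]
  have hBH : B * H = c • 1 := by rw [Matrix.mul_smul, mul_nonsing_inv _ hdet]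
  have hcc : c • C + c • C = C := by rw [← add_smul, ← mul_two, h2.val_inv_mul, one_smul]
  -- `Y = -½ B⁻¹ C` cancels the part of the new error that is linear in `C`.
  have herr : (A * (1 + Y))ᵀ * B * (A * (1 + Y)) - B =
      Yᵀ * ((B + C) * Y) - (C * (H * C) + C * (H * C)) :=
    calc (A * (1 + Y))ᵀ * B * (A * (1 + Y)) - B = (1 + Y)ᵀ * (B + C) * (1 + Y) - B := by
          simp only [C, transpose_mul, add_sub_cancel, Matrix.mul_assoc]
      _ = Yᵀ * ((B + C) * Y) + (C - (C * (H * B) + (B * H) * C)) -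
            (C * (H * C) + C * (H * C)) := by
          rw [transpose_add, transpose_one, hYt]
          simp only [Y]
          noncomm_ring
      _ = Yᵀ * ((B + C) * Y) - (C * (H * C) + C * (H * C)) := by
          rw [hHB, hBH, Matrix.mul_smul, Matrix.smul_mul, Matrix.mul_one, Matrix.one_mul, hcc,
            sub_self, add_zero]
  have hHC : H * C ∈ (I ^ j).matrix ι := Ideal.mul_mem_left _ H hA
  have hY : Y ∈ (I ^ j).matrix ι := neg_mem hHC
  have hsq : (I ^ j * I ^ j).matrix ι ≤ (I ^ (j + 1)).matrix ι :=
    Ideal.matrix_monotone ι (by rw [← pow_add]; exact Ideal.pow_le_pow_right (by omega))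
  have hCHC : C * (H * C) ∈ (I ^ (j + 1)).matrix ι := hsq (Ideal.mul_mem_matrix_mul hA hHC)
  refine ⟨A * (1 + Y), ?_, ?_⟩
  · rw [Matrix.mul_add, Matrix.mul_one, add_sub_cancel_left]
    exact Ideal.mul_mem_left _ A hY
  · rw [herr]
    refine sub_mem (hsq (Ideal.mul_mem_matrix_mul ?_ ?_)) (add_mem hCHC hCHC)
    exacts [Ideal.transpose_mem_matrix hY, Ideal.mul_mem_left _ _ hY]

theorem exists_transpose_mul_mul_eq_of_sub_mem_matrix (hI : IsNilpotent I) (h2 : IsUnit (2 : R))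
    (hB : Bᵀ = B) (hdet : IsUnit B.det) {A : Matrix ι ι R}
    (hA : Aᵀ * B * A - B ∈ I.matrix ι) :
    ∃ A', A'ᵀ * B * A' = B ∧ A' - A ∈ I.matrix ι := by
  obtain ⟨N, hN⟩ := hI
  suffices ∀ d j, N ≤ j + d → j ≠ 0 → ∀ A : Matrix ι ι R,
      Aᵀ * B * A - B ∈ (I ^ j).matrix ι →
      ∃ A', A'ᵀ * B * A' = B ∧ A' - A ∈ I.matrix ι from
    this N 1 (by omega) one_ne_zero A (by rwa [pow_one])
  intro d
  induction d with
  | zero =>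
    intro j hNj _ A hA
    have hIj : I ^ j = ⊥ :=
      le_bot_iff.1 ((Ideal.pow_le_pow_right (by omega)).trans (hN.trans Ideal.zero_eq_bot).le)
    rw [hIj, Ideal.matrix_bot, Submodule.mem_bot, sub_eq_zero] at hA
    exact ⟨A, hA, by simp⟩
  | succ d ih =>
    intro j hNj hj A hA
    obtain ⟨A₁, hA₁, hC₁⟩ := exists_transpose_mul_mul_sub_mem_pow_succ h2 hB hdet hj hA
    obtain ⟨A', hA', hsub⟩ := ih (j + 1) (by omega) (by omega) A₁ hC₁
    refine ⟨A', hA', ?_⟩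
    rw [← sub_add_sub_cancel A' A₁ A]
    exact add_mem hsub (Ideal.matrix_monotone ι (Ideal.pow_le_self hj) hA₁)

theorem isUnit_det_one_add_of_mem_matrix (hI : IsNilpotent I) (hA : A ∈ I.matrix ι) :
    IsUnit (1 + A).det :=
  hI.isUnit_det_of_sub_mem_matrix (N := 1) (by simp) (by rwa [add_sub_cancel_left])

theorem isUnit_det_one_add_of_sub_one_mem_matrix (hI : IsNilpotent I) (h2 : IsUnit (2 : R))
    (hA : A - 1 ∈ I.matrix ι) : IsUnit (1 + A).det := by
  refine hI.isUnit_det_of_sub_mem_matrix (N := (2 : R) • 1) ?_ ?_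
  · simpa [det_smul] using h2.pow _
  · rwa [two_smul, add_sub_add_left_eq_sub]

theorem cayley_mem_matrix (hA : A - 1 ∈ I.matrix ι) : cayley A ∈ I.matrix ι :=
  Ideal.mul_mem_matrix_right _ (by rw [← neg_sub]; exact neg_mem hA)

theorem cayley_sub_one_mem_matrix (hI : IsNilpotent I) (hA : A ∈ I.matrix ι) :
    cayley A - 1 ∈ I.matrix ι := by
  have hAinv : A * (1 + A)⁻¹ ∈ I.matrix ι := Ideal.mul_mem_matrix_right _ hA
  rw [← neg_sub, one_sub_cayley (isUnit_det_one_add_of_mem_matrix hI hA), two_smul]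
  exact neg_mem (add_mem hAinv hAinv)

noncomputable def cayleyEquiv (hI : IsNilpotent I) (h2 : IsUnit (2 : R)) :
    {A : Matrix ι ι R // Aᵀ * B * A = B ∧ A - 1 ∈ I.matrix ι} ≃
      {T : Matrix ι ι R // B.IsSkewAdjoint T ∧ T ∈ I.matrix ι} where
  toFun A := ⟨cayley A, (transpose_mul_mul_eq_iff_isSkewAdjoint_cayley B h2
    (isUnit_det_one_add_of_sub_one_mem_matrix hI h2 A.2.2)).1 A.2.1, cayley_mem_matrix A.2.2⟩
  invFun T := ⟨cayley T, by
    have hT := isUnit_det_one_add_of_mem_matrix hI T.2.2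
    have hT' := cayley_sub_one_mem_matrix hI T.2.2
    refine ⟨?_, hT'⟩
    rw [transpose_mul_mul_eq_iff_isSkewAdjoint_cayley B h2
      (isUnit_det_one_add_of_sub_one_mem_matrix hI h2 hT'), cayley_cayley h2 hT]
    exact T.2.1⟩
  left_inv A :=
    Subtype.ext (cayley_cayley h2 (isUnit_det_one_add_of_sub_one_mem_matrix hI h2 A.2.2))
  right_inv T := Subtype.ext (cayley_cayley h2 (isUnit_det_one_add_of_mem_matrix hI T.2.2))

noncomputable def isSkewAdjointEquiv (hB : Bᵀ = B) (hdet : IsUnit B.det) :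
    {T : Matrix ι ι R // B.IsSkewAdjoint T ∧ T ∈ I.matrix ι} ≃
      {M : Matrix ι ι R // Mᵀ = -M ∧ ∀ i j, M i j ∈ I} where
  toFun T := ⟨B * T, by rw [transpose_mul, hB, T.2.1, mul_neg], Ideal.mul_mem_left _ B T.2.2⟩
  invFun M := ⟨B⁻¹ * M, by
    rw [Matrix.IsSkewAdjoint, IsAdjointPair, transpose_mul, M.2.1, transpose_nonsing_inv, hB,
      Matrix.neg_mul, Matrix.neg_mul, nonsing_inv_mul_cancel_right B _ hdet, Matrix.mul_neg,
      mul_nonsing_inv_cancel_left B _ hdet],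
    Ideal.mul_mem_left _ _ M.2.2⟩
  left_inv T := Subtype.ext (nonsing_inv_mul_cancel_left B _ hdet)
  right_inv M := Subtype.ext (mul_nonsing_inv_cancel_left B _ hdet)

def skewEquiv {κ : Type*} [LinearOrder κ] (h2 : IsUnit (2 : R)) :
    {M : Matrix κ κ R // Mᵀ = -M ∧ ∀ i j, M i j ∈ I} ≃
      ({ij : κ × κ // ij.1 < ij.2} → I) where
  toFun M ij := ⟨M.1 ij.1.1 ij.1.2, M.2.2 _ _⟩
  invFun g := ⟨of fun i j =>
      if h : i < j then g ⟨(i, j), h⟩ else if h' : j < i then -g ⟨(j, i), h'⟩ else 0, by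
    ext i j
    rcases lt_trichotomy i j with h | rfl | h
    · simp [h, h.not_gt]
    · simp
    · simp [h, h.not_gt], fun i j => by
    dsimp only [of_apply]
    split_ifs
    exacts [(g _).2, neg_mem (g _).2, zero_mem _]⟩
  left_inv M := by
    obtain ⟨M, hM, -⟩ := M
    have hMij (i j : κ) : M j i = -M i j := by rw [← transpose_apply M, hM, neg_apply]
    ext i j
    rcases lt_trichotomy i j with h | rfl | h
    · simp [h]
    · have hdiag : (2 : R) * M i i = 0 := by
        rw [two_mul]
        nth_rw 1 [hMij i i]
        exact neg_add_cancel _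
      simpa using (h2.mul_right_eq_zero.1 hdiag).symm
    · simp [h, h.not_gt, hMij j i]
  right_inv g := funext fun ij => Subtype.ext (dif_pos ij.2)

theorem card_skew {κ : Type*} [Fintype κ] [LinearOrder κ] (h2 : IsUnit (2 : R)) :
    Nat.card {M : Matrix κ κ R // Mᵀ = -M ∧ ∀ i j, M i j ∈ I} =
      Nat.card I ^ (Fintype.card κ).choose 2 := by
  rw [Nat.card_congr (skewEquiv h2), Nat.card_fun,
    Nat.card_eq_fintype_card (α := {ij : κ × κ // _}), Fintype.card_subtype,
    Fintype.card_product_filter_lt]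

end Matrix

namespace OGroup

variable {S : Type*} [CommRing S]

def map (f : R →+* S) (B : Matrix ι ι R) : OGroup B →* OGroup (B.map f) :=
  MonoidHom.codRestrict
    ((Units.map (f.mapMatrix : Matrix ι ι R →+* Matrix ι ι S).toMonoidHom).comp
      (OGroup B).subtype)
    (OGroup (B.map f)) (fun x => mem_OGroup_map f B x x.2)

variable {f : R →+* S} {B : Matrix ι ι R}

theorem mem_ker_map_iff {x : OGroup B} :
    x ∈ (map f B).ker ↔
      ((x : (Matrix ι ι R)ˣ) : Matrix ι ι R) - 1 ∈ (RingHom.ker f).matrix ι := by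
  rw [MonoidHom.mem_ker, ← map_eq_map_iff_sub_mem_matrix, Subtype.ext_iff, Units.ext_iff,
    Matrix.map_one f f.map_zero f.map_one]
  rfl

theorem map_surjective (hf : Function.Surjective f) (hI : IsNilpotent (RingHom.ker f))
    (h2 : IsUnit (2 : R)) (hB : Bᵀ = B) (hdet : IsUnit B.det) :
    Function.Surjective (map f B) := by
  rintro ⟨y, hy⟩
  set A := (y : Matrix ι ι S).map (Function.surjInv hf)
  have hA : A.map f = y := by
    ext i j
    exact Function.surjInv_eq hf _
  have hC : Aᵀ * B * A - B ∈ (RingHom.ker f).matrix ι := by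
    rw [← map_eq_map_iff_sub_mem_matrix, Matrix.map_mul, Matrix.map_mul, transpose_map, hA]
    exact hy
  obtain ⟨A', hA', hsub⟩ := exists_transpose_mul_mul_eq_of_sub_mem_matrix hI h2 hB hdet hC
  refine ⟨⟨nonsingInvUnit A' (isUnit_det_of_transpose_mul_mul_eq hdet hA'), hA'⟩, ?_⟩
  ext : 2
  exact ((map_eq_map_iff_sub_mem_matrix f).2 hsub).trans hA

noncomputable def kerMapEquiv (hdet : IsUnit B.det) :
    (map f B).ker ≃
      {A : Matrix ι ι R // Aᵀ * B * A = B ∧ A - 1 ∈ (RingHom.ker f).matrix ι} where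
  toFun x := ⟨((x : OGroup B) : (Matrix ι ι R)ˣ), x.1.2, mem_ker_map_iff.1 x.2⟩
  invFun A := ⟨⟨nonsingInvUnit A.1 (isUnit_det_of_transpose_mul_mul_eq hdet A.2.1), A.2.1⟩,
    mem_ker_map_iff.2 A.2.2⟩
  left_inv _ := Subtype.ext (Subtype.ext (Units.ext rfl))
  right_inv _ := rfl

theorem card_ker_map (hI : IsNilpotent (RingHom.ker f)) (h2 : IsUnit (2 : R)) (hB : Bᵀ = B)
    (hdet : IsUnit B.det) :
    Nat.card (map f B).ker =
      Nat.card {M : Matrix ι ι R // Mᵀ = -M ∧ ∀ i j, M i j ∈ RingHom.ker f} :=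
  Nat.card_congr <| (kerMapEquiv hdet).trans <|
    (cayleyEquiv hI h2).trans (isSkewAdjointEquiv hB hdet)

end OGroup

namespace ZMod

variable {p k : ℕ}

theorem ker_castHom_pow (hk : k ≠ 0) :
    RingHom.ker (castHom (dvd_pow_self p hk) (ZMod p)) = Ideal.span {(p : ZMod (p ^ k))} := by
  refine le_antisymm (fun x hx => ?_) ((Ideal.span_singleton_le_iff_mem _).2 (by simp))
  obtain ⟨m, rfl⟩ := intCast_surjective x
  rw [RingHom.mem_ker, map_intCast, intCast_zmod_eq_zero_iff_dvd] at hx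
  obtain ⟨c, rfl⟩ := hx
  exact Ideal.mem_span_singleton.2 ⟨c, by push_cast; rfl⟩

theorem isNilpotent_ker_castHom_pow (hk : k ≠ 0) :
    IsNilpotent (RingHom.ker (castHom (dvd_pow_self p hk) (ZMod p))) :=
  ⟨k, by rw [ker_castHom_pow hk, Ideal.span_singleton_pow, ← Nat.cast_pow, natCast_self,
    Ideal.zero_eq_bot, Ideal.span_singleton_eq_bot]⟩

theorem card_ker_castHom_pow (hp : p ≠ 0) (hk : k ≠ 0) :
    Nat.card (RingHom.ker (castHom (dvd_pow_self p hk) (ZMod p))) = p ^ (k - 1) := by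
  set g := castHom (dvd_pow_self p hk) (ZMod p)
  have h := AddSubgroup.card_mul_index g.toAddMonoidHom.ker
  rw [AddSubgroup.index_ker, AddMonoidHom.range_eq_top.2 (castHom_surjective (dvd_pow_self p hk)),
    AddSubgroup.card_top, Nat.card_zmod, Nat.card_zmod] at h
  refine Nat.eq_of_mul_eq_mul_right (Nat.pos_of_ne_zero hp) (h.trans ?_)
  rw [← pow_succ, Nat.sub_add_cancel (Nat.one_le_iff_ne_zero.2 hk)]

theorem isUnit_two_of_prime (hp : p.Prime) (hp2 : p ≠ 2) : IsUnit (2 : ZMod (p ^ k)) := by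
  have h : Nat.Coprime 2 (p ^ k) := ((Nat.coprime_primes Nat.prime_two hp).2 hp2.symm).pow_right k
  simpa using (unitOfCoprime 2 h).isUnit

end ZMod

theorem stmt7 (p : ℕ) (hp : p.Prime) (hp2 : p ≠ 2) (k : ℕ) (hk : 1 ≤ k) (n : ℕ)
    (B : Matrix (Fin n) (Fin n) (ZMod (p ^ k))) (hsymm : B.IsSymm) (hdet : IsUnit B.det) :
    Function.Surjective (redPi p k (by omega) B) ∧
      Nat.card (redPi p k (by omega) B).ker = p ^ ((k - 1) * (n * (n - 1) / 2)) := by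
  have hk0 : k ≠ 0 := by omega
  have hI := ZMod.isNilpotent_ker_castHom_pow (p := p) hk0
  have h2 := ZMod.isUnit_two_of_prime (k := k) hp hp2
  refine ⟨OGroup.map_surjective (ZMod.castHom_surjective _) hI h2 hsymm hdet, ?_⟩
  change Nat.card (OGroup.map (ZMod.castHom (dvd_pow_self p hk0) (ZMod p)) B).ker = _
  rw [OGroup.card_ker_map hI h2 hsymm hdet, Matrix.card_skew h2,
    ZMod.card_ker_castHom_pow hp.ne_zero hk0, Fintype.card_fin, Nat.choose_two_right, pow_mul]
end

section
/- Let q be a prime and let H be a finite group whose cardinality is a power of q, and suppose the maximal order of an element of H is q^t with t ≥ 1. Let G = (ℤ/qℤ → H) ⋊_φ ℤ/qℤ be the semidirect product of the group of functions from ℤ/qℤ to H (with pointwise multiplication) by ℤ/qℤ, where a ∈ ℤ/qℤ acts by the automorphism (φ(a)f)(i) = f(i − a) (this is the regular wreath product H ≀ᵣ ℤ/qℤ). Then the maximal order of an element of G is q^{t+1}. -/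
/-- The action of `ℤ/qℤ` on the direct product `ℤ/qℤ → H` by translating indices. -/
def shiftAut (q : ℕ) (H : Type*) [Group H] :
    Multiplicative (ZMod q) →* MulAut (ZMod q → H) where
  toFun a :=
    { toFun := fun f i => f (i - a.toAdd)
      invFun := fun f i => f (i + a.toAdd)
      left_inv := fun f => funext fun i => by simp
      right_inv := fun f => funext fun i => by simp
      map_mul' := fun f g => rfl }
  map_one' := by
    ext f i
    simp
  map_mul' := fun a b => by
    ext f i
    show f (i - (a * b).toAdd) = f (i - a.toAdd - b.toAdd)
    rw [toAdd_mul, sub_sub]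

/-! Since `ℤ/qℤ` has exponent `q`, every `g ^ q` lies in the base group `ℤ/qℤ → H`, whose exponent
divides `q ^ t` because `H` is a `q`-group; hence `g ^ q ^ (t + 1) = 1`. Conversely, for `h` of order
`q ^ t`, the `i`-th coordinate of `(δ₀ h, 1) ^ q` is the ordered product of the translates
`δ₀ h (i - k)`, `k < q`, exactly one of which is `h`; so `(δ₀ h, 1) ^ q` is the constant function `h`,
which has order `q ^ t`. -/

namespace SemidirectProduct

variable {N G : Type*} [Group N] [Group G] {φ : G →* MulAut N}

theorem right_pow (g : N ⋊[φ] G) (n : ℕ) : (g ^ n).right = g.right ^ n :=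
  map_pow rightHom g n

theorem pow_mul_eq_one {g : N ⋊[φ] G} {n m : ℕ} (hn : g.right ^ n = 1)
    (hm : ∀ x : N, x ^ m = 1) : g ^ (n * m) = 1 := by
  have hg : g ^ n = inl (g ^ n).left := by
    rw [← inl_left_mul_inr_right (g ^ n), right_pow, hn, map_one, mul_one, left_inl]
  rw [pow_mul, hg, ← map_pow, hm, map_one]

end SemidirectProduct

theorem IsPGroup.orderOf_dvd_of_orderOf_le {p : ℕ} [Fact p.Prime] {G : Type*} [Group G]
    (hG : IsPGroup p G) {t : ℕ} {g : G} (hg : orderOf g ≤ p ^ t) : orderOf g ∣ p ^ t := by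
  obtain ⟨k, hk⟩ := hG.exists_orderOf_eq_pow g
  rw [hk] at hg ⊢
  exact pow_dvd_pow p ((Nat.pow_le_pow_iff_right (Fact.out : p.Prime).one_lt).mp hg)

theorem ZMod.multiplicative_pow_self (q : ℕ) (a : Multiplicative (ZMod q)) : a ^ q = 1 := by
  rw [← toAdd_eq_zero, toAdd_pow, nsmul_eq_mul, ZMod.natCast_self, zero_mul]

section Wreath

variable {q : ℕ} {H : Type*} [Group H]

theorem shiftAut_pow_left (g : (ZMod q → H) ⋊[shiftAut q H] Multiplicative (ZMod q))
    (n : ℕ) (i : ZMod q) :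
    (g ^ n).left i = ((List.range n).map fun k => g.left (i - (g.right ^ k).toAdd)).prod := by
  induction n with
  | zero => simp
  | succ n ih =>
    rw [pow_succ, SemidirectProduct.mul_left, Pi.mul_apply, ih, SemidirectProduct.right_pow,
      List.range_succ, List.map_append, List.prod_append, List.map_singleton, List.prod_singleton]
    rfl

theorem shiftAut_mulSingle_pow_card [NeZero q] (h : H) :
    (⟨Pi.mulSingle 0 h, .ofAdd 1⟩ : (ZMod q → H) ⋊[shiftAut q H] Multiplicative (ZMod q)) ^ q =
      SemidirectProduct.inl (Function.const _ h) := by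
  ext i
  · rw [shiftAut_pow_left, List.prod_map_eq_pow_single i.val]
    · simp [ZMod.val_lt]
    · intro k hk hkq
      rw [toAdd_pow, toAdd_ofAdd, nsmul_one]
      refine Pi.mulSingle_eq_of_ne ?_ _
      contrapose! hk
      rw [sub_eq_zero.mp hk, ZMod.val_natCast_of_lt (List.mem_range.mp hkq)]
  · simp [SemidirectProduct.right_pow, ZMod.multiplicative_pow_self]

end Wreath

theorem stmt11_general (q : ℕ) (hq : q.Prime) (H : Type) [Group H]
    (hcard : ∃ m : ℕ, Nat.card H = q ^ m) (t : ℕ) (ht : 1 ≤ t)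
    (hmax : ∃ h : H, orderOf h = q ^ t) (hbound : ∀ h : H, orderOf h ≤ q ^ t) :
    (∃ g : (ZMod q → H) ⋊[shiftAut q H] Multiplicative (ZMod q),
        orderOf g = q ^ (t + 1)) ∧
      ∀ g : (ZMod q → H) ⋊[shiftAut q H] Multiplicative (ZMod q),
        orderOf g ≤ q ^ (t + 1) := by
  have := Fact.mk hq
  obtain ⟨m, hm⟩ := hcard
  have hexp (f : ZMod q → H) : f ^ q ^ t = 1 := funext fun i =>
    orderOf_dvd_iff_pow_eq_one.mp <| (IsPGroup.of_card hm).orderOf_dvd_of_orderOf_le (hbound (f i))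
  have hkill (g : (ZMod q → H) ⋊[shiftAut q H] Multiplicative (ZMod q)) :
      g ^ q ^ (t + 1) = 1 := by
    rw [pow_succ']
    exact SemidirectProduct.pow_mul_eq_one (ZMod.multiplicative_pow_self q _) hexp
  refine ⟨?_, fun g => orderOf_le_of_pow_eq_one (pow_pos hq.pos _) (hkill g)⟩
  obtain ⟨h, hh⟩ := hmax
  have : NeZero q := ⟨hq.ne_zero⟩
  refine ⟨⟨Pi.mulSingle 0 h, .ofAdd 1⟩, orderOf_eq_prime_pow ?_ (hkill _)⟩
  obtain ⟨s, rfl⟩ : ∃ s, t = s + 1 := ⟨t - 1, by omega⟩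
  have hlt : q ^ s < orderOf h := hh ▸ pow_lt_pow_right₀ hq.one_lt (lt_add_one s)
  rw [pow_succ', pow_mul, shiftAut_mulSingle_pow_card, ← map_pow,
    map_eq_one_iff _ SemidirectProduct.inl_injective]
  exact fun h1 => pow_ne_one_of_lt_orderOf (pow_ne_zero s hq.ne_zero) hlt (congrFun h1 0)

/-- in the regular wreath product `H ≀ᵣ ℤ/qℤ`, the maximal order of an
element is `q^(t+1)`, where `q^t` is the maximal order of an element of `H`. -/
theorem stmt11 (q : ℕ) (hq : q.Prime) (H : Type) [Group H] [Finite H]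
    (hcard : ∃ m : ℕ, Nat.card H = q ^ m) (t : ℕ) (ht : 1 ≤ t)
    (hmax : ∃ h : H, orderOf h = q ^ t) (hbound : ∀ h : H, orderOf h ≤ q ^ t) :
    (∃ g : (ZMod q → H) ⋊[shiftAut q H] Multiplicative (ZMod q),
        orderOf g = q ^ (t + 1)) ∧
      ∀ g : (ZMod q → H) ⋊[shiftAut q H] Multiplicative (ZMod q),
        orderOf g ≤ q ^ (t + 1) :=
  stmt11_general q hq H hcard t ht hmax hbound
end

section
/- Let p be an odd prime and q an odd prime with q ≠ p. Let B be a p-form (i.e. k = 1) of rank n and let A be an isometry of B of order exactly q^r for some r ≥ 1. Then there exist natural numbers n₁, n₂ with n₁ + n₂ = n and an invertible n×n matrix U over ℤ/pℤ such that Uᵀ B U is block-diagonal diag(B_fix, B_oth) with blocks of sizes n₁ and n₂, U⁻¹ A U is the block-diagonal matrix diag(I_{n₁}, A_oth), and A_oth has no non-zero fixed points (A_oth x = x implies x = 0 for x ∈ (ℤ/pℤ)^{n₂}). -/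
/-!
Since `p ∤ q ^ r = m`, one can average the powers of `A`: `P = m⁻¹ • ∑_{i < m} Aⁱ` is an
idempotent with `A * P = P * A = P` that fixes every fixed vector of `A`, and the isometry
condition makes it self-adjoint for `B`: `Pᵀ * B = B * P`. In a basis adapted to
`range P ⊕ ker P` the matrix of `P` is `diag(1, 0)`; commuting with it forces `A` and `B` to be
block diagonal, with `A = 1` on `range P`, while a fixed vector of `A` in `ker P` is fixed by
`P` and hence zero.
-/

open Matrix

section PowAverage

variable (K : Type*) {R : Type*} [Field K] [Ring R] [Algebra K R]

noncomputable def powAverage (a : R) (m : ℕ) : R := (m : K)⁻¹ • ∑ i ∈ Finset.range m, a ^ i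

variable {K} {a x : R} {m : ℕ}

theorem powAverage_mul_of_forall (hm : (m : K) ≠ 0) (h : ∀ i, a ^ i * x = x) :
    powAverage K a m * x = x := by
  simp [powAverage, Finset.sum_mul, h, ← Nat.cast_smul_eq_nsmul K, smul_smul, hm]

theorem mul_powAverage_of_forall (hm : (m : K) ≠ 0) (h : ∀ i, x * a ^ i = x) :
    x * powAverage K a m = x := by
  simp [powAverage, Finset.mul_sum, h, ← Nat.cast_smul_eq_nsmul K, smul_smul, hm]

theorem mul_powAverage (ha : a ^ m = 1) : a * powAverage K a m = powAverage K a m := by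
  have h := mul_geom_sum a m
  rw [ha, sub_self, sub_mul, one_mul, sub_eq_zero] at h
  rw [powAverage, mul_smul_comm, h]

theorem powAverage_mul (ha : a ^ m = 1) : powAverage K a m * a = powAverage K a m := by
  have h := geom_sum_mul a m
  rw [ha, sub_self, mul_sub, mul_one, sub_eq_zero] at h
  rw [powAverage, smul_mul_assoc, h]

theorem pow_mul_powAverage (ha : a ^ m = 1) (i : ℕ) :
    a ^ i * powAverage K a m = powAverage K a m := by
  induction i with
  | zero => simp
  | succ i ih => rw [pow_succ, mul_assoc, mul_powAverage ha, ih]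

theorem isIdempotentElem_powAverage (hm : (m : K) ≠ 0) (ha : a ^ m = 1) :
    IsIdempotentElem (powAverage K a m) :=
  powAverage_mul_of_forall hm (pow_mul_powAverage ha)

theorem map_powAverage {S F : Type*} [Ring S] [Algebra K S] [FunLike F R S]
    [AlgHomClass F K R S] (f : F) (a : R) (m : ℕ) :
    f (powAverage K a m) = powAverage K (f a) m := by
  simp [powAverage, map_smul, map_sum, map_pow]

end PowAverage

def finSumEquivOfEq {n n₁ n₂ : ℕ} (h : n = n₁ + n₂) : Fin n ≃ Fin n₁ ⊕ Fin n₂ :=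
  (finCongr h).trans finSumFinEquiv.symm

namespace Matrix

section

variable {K ι : Type*} [Field K] [Fintype ι] [DecidableEq ι] {m : ℕ}

theorem transpose_powAverage (A : Matrix ι ι K) : (powAverage K A m)ᵀ = powAverage K Aᵀ m := by
  simp [powAverage, transpose_sum, transpose_pow]

theorem powAverage_mulVec_of_mulVec_eq {A : Matrix ι ι K} {v : ι → K} (hm : (m : K) ≠ 0)
    (hv : A *ᵥ v = v) : powAverage K A m *ᵥ v = v := by
  have hpow : ∀ i : ℕ, A ^ i *ᵥ v = v := by
    intro i
    induction i with
    | zero => simp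
    | succ i ih => rw [pow_succ, ← mulVec_mulVec, hv, ih]
  simp [powAverage, smul_mulVec, sum_mulVec, hpow, ← Nat.cast_smul_eq_nsmul K, smul_smul, hm]

theorem transpose_pow_mul_pow_eq {A B : Matrix ι ι K} (hAB : Aᵀ * B * A = B) (i : ℕ) :
    (A ^ i)ᵀ * B * A ^ i = B := by
  induction i with
  | zero => simp
  | succ i ih =>
    calc (A ^ (i + 1))ᵀ * B * A ^ (i + 1) = Aᵀ * ((A ^ i)ᵀ * B * A ^ i) * A := by
          simp only [pow_succ, transpose_mul, Matrix.mul_assoc]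
      _ = B := by rw [ih, hAB]

theorem transpose_powAverage_mul {A B : Matrix ι ι K} (hm : (m : K) ≠ 0) (hA : A ^ m = 1)
    (hAB : Aᵀ * B * A = B) : (powAverage K A m)ᵀ * B = B * powAverage K A m := by
  set P := powAverage K A m
  have hP : ∀ i, A ^ i * P = P := pow_mul_powAverage hA
  have h₁ : Pᵀ * (B * P) = B * P := by
    rw [transpose_powAverage]
    refine powAverage_mul_of_forall hm fun i => ?_
    calc Aᵀ ^ i * (B * P) = (A ^ i)ᵀ * B * A ^ i * P := by
          rw [transpose_pow, Matrix.mul_assoc (_ * B), hP, Matrix.mul_assoc]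
      _ = B * P := by rw [transpose_pow_mul_pow_eq hAB]
  have h₂ : Pᵀ * B * P = Pᵀ * B := by
    refine mul_powAverage_of_forall hm fun i => ?_
    calc Pᵀ * B * A ^ i = (A ^ i * P)ᵀ * B * A ^ i := by rw [hP]
      _ = Pᵀ * ((A ^ i)ᵀ * B * A ^ i) := by simp only [transpose_mul, Matrix.mul_assoc]
      _ = Pᵀ * B := by rw [transpose_pow_mul_pow_eq hAB]
  rw [← h₂, Matrix.mul_assoc, h₁]

theorem transpose_conj_mul_conj {U : Matrix ι ι K} (hU : IsUnit U.det) (A B : Matrix ι ι K) :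
    (U⁻¹ * A * U)ᵀ * (Uᵀ * B * U) * (U⁻¹ * A * U) = Uᵀ * (Aᵀ * B * A) * U := by
  have h₁ : U * U⁻¹ = 1 := mul_nonsing_inv U hU
  have h₂ : (U⁻¹)ᵀ * Uᵀ = 1 := by rw [← transpose_mul, h₁, transpose_one]
  calc (U⁻¹ * A * U)ᵀ * (Uᵀ * B * U) * (U⁻¹ * A * U)
      = Uᵀ * Aᵀ * ((U⁻¹)ᵀ * Uᵀ) * B * (U * U⁻¹) * A * U := by
        simp only [transpose_mul, Matrix.mul_assoc]
    _ = Uᵀ * (Aᵀ * B * A) * U := by simp only [h₁, h₂, Matrix.mul_one, Matrix.mul_assoc]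

end

section Blocks

variable {R κ₁ κ₂ : Type*} [Ring R] [Fintype κ₁] [Fintype κ₂] [DecidableEq κ₁]
  {M : Matrix (κ₁ ⊕ κ₂) (κ₁ ⊕ κ₂) R}

theorem eq_fromBlocks_one_of_mul_fromBlocks_one_zero
    (h₁ : M * fromBlocks 1 0 0 0 = fromBlocks 1 0 0 0)
    (h₂ : fromBlocks 1 0 0 0 * M = fromBlocks 1 0 0 0) :
    M = fromBlocks 1 0 0 M.toBlocks₂₂ := by
  rw [← fromBlocks_toBlocks M, fromBlocks_multiply] at h₁ h₂
  simp only [Matrix.mul_one, Matrix.mul_zero, add_zero, Matrix.one_mul, Matrix.zero_mul,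
    fromBlocks_inj] at h₁ h₂
  conv_lhs => rw [← fromBlocks_toBlocks M]
  rw [h₁.1, h₁.2.2.1, h₂.2.1]

theorem eq_fromBlocks_of_commute_fromBlocks_one_zero
    (h : fromBlocks 1 0 0 0 * M = M * fromBlocks 1 0 0 0) :
    M = fromBlocks M.toBlocks₁₁ 0 0 M.toBlocks₂₂ := by
  conv_lhs => rw [← fromBlocks_toBlocks M]
  rw [← fromBlocks_toBlocks M, fromBlocks_multiply, fromBlocks_multiply] at h
  simp only [Matrix.mul_one, Matrix.mul_zero, add_zero, Matrix.one_mul, Matrix.zero_mul,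
    fromBlocks_inj] at h
  rw [h.2.1, ← h.2.2.1]

end Blocks

theorem exists_inv_mul_mul_eq_fromBlocks_of_isIdempotentElem {K : Type*} [Field K] {n : ℕ}
    {P : Matrix (Fin n) (Fin n) K} (hP : IsIdempotentElem P) :
    ∃ (n₁ n₂ : ℕ) (h : n = n₁ + n₂) (U : Matrix (Fin n) (Fin n) K), IsUnit U.det ∧
      U⁻¹ * P * U = (fromBlocks 1 0 0 0).submatrix (finSumEquivOfEq h) (finSumEquivOfEq h) := by
  set f := toLin' P
  have hf : IsIdempotentElem f := hP.map toLinAlgEquiv'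
  have hc := LinearMap.IsIdempotentElem.isCompl hf
  let b₁ := Module.finBasis K (LinearMap.range f)
  let b₂ := Module.finBasis K (LinearMap.ker f)
  have h : n = Module.finrank K (LinearMap.range f) + Module.finrank K (LinearMap.ker f) := by
    rw [Submodule.finrank_add_eq_of_isCompl hc, Module.finrank_fin_fun]
  let σ := finSumEquivOfEq h
  let b₀ := (b₁.prod b₂).map (Submodule.prodEquivOfIsCompl _ _ hc)
  have hb₁ : ∀ k, f (b₀ (Sum.inl k)) = b₀ (Sum.inl k) := fun k => by
    simpa [b₀] using (LinearMap.IsIdempotentElem.mem_range_iff hf).1 (b₁ k).2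
  have hb₂ : ∀ k, f (b₀ (Sum.inr k)) = 0 := fun k => by simp [b₀]
  let b := b₀.reindex σ.symm
  let e := Pi.basisFun K (Fin n)
  have hU : (e.toMatrix b)⁻¹ = b.toMatrix e := inv_eq_left_inv (b.toMatrix_mul_toMatrix_flip e)
  refine ⟨_, _, h, e.toMatrix b, isUnit_det_of_left_inverse (b.toMatrix_mul_toMatrix_flip e), ?_⟩
  have hPf : P = LinearMap.toMatrix e e f := by simp [f, e]
  rw [hU, hPf, basis_toMatrix_mul_linearMap_toMatrix_mul_basis_toMatrix]
  ext i j
  rw [LinearMap.toMatrix_apply, submatrix_apply]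
  simp only [b, Module.Basis.reindex_apply, Module.Basis.repr_reindex_apply, Equiv.symm_symm]
  change _ = fromBlocks 1 0 0 0 (σ i) (σ j)
  generalize σ i = x, σ j = y
  rcases x with k | k <;> rcases y with l | l
  · rw [hb₁, b₀.repr_self, Finsupp.single_apply, fromBlocks_apply₁₁, one_apply]
    simp only [Sum.inl.injEq, eq_comm]
  · rw [hb₂, map_zero]; rfl
  · rw [hb₁, b₀.repr_self]; exact Finsupp.single_eq_of_ne (by simp)
  · rw [hb₂, map_zero]; rfl

section Decomposition

variable {K κ₁ κ₂ : Type*} [Field K] [Fintype κ₁] [Fintype κ₂] [DecidableEq κ₁] [DecidableEq κ₂]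
  {m : ℕ}

theorem exists_fromBlocks_of_powAverage_eq {A B : Matrix (κ₁ ⊕ κ₂) (κ₁ ⊕ κ₂) K}
    (hm : (m : K) ≠ 0) (hA : A ^ m = 1) (hAB : Aᵀ * B * A = B)
    (hP : powAverage K A m = fromBlocks 1 0 0 0) :
    ∃ (B₁ : Matrix κ₁ κ₁ K) (B₂ A₂ : Matrix κ₂ κ₂ K), B = fromBlocks B₁ 0 0 B₂ ∧
      A = fromBlocks 1 0 0 A₂ ∧ ∀ x, A₂ *ᵥ x = x → x = 0 := by
  have hAP : A * fromBlocks 1 0 0 0 = fromBlocks 1 0 0 0 := hP ▸ mul_powAverage hA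
  have hPA : fromBlocks 1 0 0 0 * A = fromBlocks 1 0 0 0 := hP ▸ powAverage_mul hA
  have hPB := transpose_powAverage_mul hm hA hAB
  rw [hP, fromBlocks_transpose] at hPB
  simp only [transpose_one, transpose_zero] at hPB
  have hA₂ := eq_fromBlocks_one_of_mul_fromBlocks_one_zero hAP hPA
  refine ⟨B.toBlocks₁₁, B.toBlocks₂₂, A.toBlocks₂₂,
    eq_fromBlocks_of_commute_fromBlocks_one_zero hPB, hA₂, fun x hx => ?_⟩
  have hv : A *ᵥ Sum.elim (0 : κ₁ → K) x = Sum.elim (0 : κ₁ → K) x := by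
    rw [hA₂, fromBlocks_mulVec]
    simp [hx]
  have hPv := powAverage_mulVec_of_mulVec_eq hm hv
  rw [hP, fromBlocks_mulVec] at hPv
  simpa using (congrArg (· ∘ Sum.inr) hPv).symm

theorem exists_conj_fromBlocks_of_powAverage_eq {ι : Type*} [Fintype ι] [DecidableEq ι]
    {A B U : Matrix ι ι K} (hm : (m : K) ≠ 0) (hA : A ^ m = 1) (hAB : Aᵀ * B * A = B)
    (hU : IsUnit U.det) (e : ι ≃ κ₁ ⊕ κ₂)
    (hP : U⁻¹ * powAverage K A m * U = (fromBlocks 1 0 0 0).submatrix e e) :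
    ∃ (B₁ : Matrix κ₁ κ₁ K) (B₂ A₂ : Matrix κ₂ κ₂ K),
      Uᵀ * B * U = (fromBlocks B₁ 0 0 B₂).submatrix e e ∧
      U⁻¹ * A * U = (fromBlocks 1 0 0 A₂).submatrix e e ∧ ∀ x, A₂ *ᵥ x = x → x = 0 := by
  let φ : Matrix ι ι K ≃ₐ[K] Matrix (κ₁ ⊕ κ₂) (κ₁ ⊕ κ₂) K :=
    (MulSemiringAction.toAlgEquiv K _ (ConjAct.toConjAct (nonsingInvUnit U hU)⁻¹)).trans
      (reindexAlgEquiv K K e)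
  have hφ : ∀ M, φ M = reindex e e (U⁻¹ * M * U) := fun M => by
    simp [φ, ConjAct.units_smul_def, nonsingInvUnit]
  obtain ⟨B₁, B₂, A₂, hB, hA, hfix⟩ :=
    exists_fromBlocks_of_powAverage_eq (A := φ A) (B := reindex e e (Uᵀ * B * U)) hm
      (by rw [← map_pow, hA, map_one])
      (by rw [hφ, transpose_reindex, ← coe_reindexAlgEquiv K K, ← map_mul, ← map_mul,
        transpose_conj_mul_conj hU, hAB])
      (by rw [← map_powAverage, hφ, hP]; simp)
  refine ⟨B₁, B₂, A₂, ?_, ?_, hfix⟩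
  · rw [← (reindex e e).symm_apply_apply (Uᵀ * B * U), hB]; rfl
  · rw [← (reindex e e).symm_apply_apply (U⁻¹ * A * U), ← hφ, hA]; rfl

end Decomposition

end Matrix

theorem stmt15_general (p q : ℕ) (hp : p.Prime) (hq : q.Prime)
    (hpq : p ≠ q) (n : ℕ)
    (B : Matrix (Fin n) (Fin n) (ZMod p))
    (A : Matrix (Fin n) (Fin n) (ZMod p)) (hiso : Aᵀ * B * A = B)
    (r : ℕ) (hord : orderOf A = q ^ r) :
    ∃ (n₁ n₂ : ℕ) (h : n = n₁ + n₂) (U : Matrix (Fin n) (Fin n) (ZMod p)),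
      IsUnit U.det ∧
      ∃ (Bfix : Matrix (Fin n₁) (Fin n₁) (ZMod p))
        (Both : Matrix (Fin n₂) (Fin n₂) (ZMod p))
        (Aoth : Matrix (Fin n₂) (Fin n₂) (ZMod p)),
        Uᵀ * B * U = (Matrix.fromBlocks Bfix 0 0 Both).submatrix
            (fun i => finSumFinEquiv.symm (Fin.cast h i))
            (fun i => finSumFinEquiv.symm (Fin.cast h i)) ∧
        U⁻¹ * A * U = (Matrix.fromBlocks (1 : Matrix (Fin n₁) (Fin n₁) (ZMod p)) 0 0
            Aoth).submatrix
            (fun i => finSumFinEquiv.symm (Fin.cast h i))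
            (fun i => finSumFinEquiv.symm (Fin.cast h i)) ∧
        ∀ x : Fin n₂ → ZMod p, Aoth.mulVec x = x → x = 0 := by
  have : Fact p.Prime := ⟨hp⟩
  have hA : A ^ q ^ r = 1 := hord ▸ pow_orderOf_eq_one A
  have hm : ((q ^ r : ℕ) : ZMod p) ≠ 0 := by
    rw [Ne, ZMod.natCast_eq_zero_iff]
    exact fun hdvd => hpq ((Nat.prime_dvd_prime_iff_eq hp hq).1 (hp.dvd_of_dvd_pow hdvd))
  obtain ⟨n₁, n₂, h, U, hU, hPU⟩ :=
    exists_inv_mul_mul_eq_fromBlocks_of_isIdempotentElem (isIdempotentElem_powAverage hm hA)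
  obtain ⟨Bfix, Both, Aoth, hB, hAU, hfix⟩ :=
    exists_conj_fromBlocks_of_powAverage_eq hm hA hiso hU _ hPU
  exact ⟨n₁, n₂, h, U, hU, Bfix, Both, Aoth, hB, hAU, hfix⟩

theorem stmt15 (p q : ℕ) (hp : p.Prime) (hq : q.Prime) (hp2 : p ≠ 2) (hq2 : q ≠ 2)
    (hpq : p ≠ q) (n : ℕ)
    (B : Matrix (Fin n) (Fin n) (ZMod p)) (hsymm : B.IsSymm) (hdet : IsUnit B.det)
    (A : Matrix (Fin n) (Fin n) (ZMod p)) (hiso : Aᵀ * B * A = B)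
    (r : ℕ) (hr : 1 ≤ r) (hord : orderOf A = q ^ r) :
    ∃ (n₁ n₂ : ℕ) (h : n = n₁ + n₂) (U : Matrix (Fin n) (Fin n) (ZMod p)),
      IsUnit U.det ∧
      ∃ (Bfix : Matrix (Fin n₁) (Fin n₁) (ZMod p))
        (Both : Matrix (Fin n₂) (Fin n₂) (ZMod p))
        (Aoth : Matrix (Fin n₂) (Fin n₂) (ZMod p)),
        Uᵀ * B * U = (Matrix.fromBlocks Bfix 0 0 Both).submatrix
            (fun i => finSumFinEquiv.symm (Fin.cast h i))
            (fun i => finSumFinEquiv.symm (Fin.cast h i)) ∧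
        U⁻¹ * A * U = (Matrix.fromBlocks (1 : Matrix (Fin n₁) (Fin n₁) (ZMod p)) 0 0
            Aoth).submatrix
            (fun i => finSumFinEquiv.symm (Fin.cast h i))
            (fun i => finSumFinEquiv.symm (Fin.cast h i)) ∧
        ∀ x : Fin n₂ → ZMod p, Aoth.mulVec x = x → x = 0 :=
  stmt15_general p q hp hq hpq n B A hiso r hord
end

section
/- Let p ≠ q be odd primes, let s be the largest integer such that q^s divides p^{2[q|p]} − 1, and let r ≥ s. Let B be a p-form (i.e. k = 1) of rank 2[q|p]·q^{r−s} with ε(B) = η(q)^{q^{r−s}}. Then every isometry ψ of B of order exactly q^r has no non-zero fixed points. -/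
open Matrix

/-- `minExp p q` is the least positive integer `a` such that `q ∣ p^a - 1` or `q ∣ p^a + 1`.
(This is denoted `[q|p]` in the paper.) -/
noncomputable def minExp (p q : ℕ) : ℕ :=
  sInf {a : ℕ | 0 < a ∧ (q ∣ p ^ a - 1 ∨ q ∣ p ^ a + 1)}

/-- `eta p q` is `1` if `q ∣ p^[q|p] - 1` and `-1` otherwise. -/
noncomputable def eta (p q : ℕ) : ℤ :=
  if q ∣ p ^ minExp p q - 1 then 1 else -1

open Classical in
/-- The index `ε(B)` of a symmetric bilinear form `B` over `ℤ/p^kℤ`: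
`ε₁ · ε₂`, where `ε₁ = 1` iff `det B` is a square, and
`ε₂ = -1` iff `p ≡ 3 (mod 4)` and the rank is `≡ 2 (mod 4)`. -/
noncomputable def epsilon (p : ℕ) {ι : Type*} [Fintype ι] [DecidableEq ι] {R : Type*}
    [CommRing R] (B : Matrix ι ι R) : ℤ :=
  (if IsSquare B.det then 1 else -1) *
    (if p % 4 = 3 ∧ Fintype.card ι % 4 = 2 then -1 else 1)

section Helpers

open Polynomial


lemma evalCharpoly {n : Type*} [DecidableEq n] [Fintype n] {K : Type*} [CommRing K]
    (M : Matrix n n K) (μ : K) : M.charpoly.eval μ = (μ • (1 : Matrix n n K) - M).det := by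
  rw [Matrix.charpoly, ← Polynomial.coe_evalRingHom, RingHom.map_det]
  congr 1
  ext i j
  by_cases h : i = j <;>
    simp [Matrix.charmatrix_apply, h, Matrix.one_apply, Matrix.diagonal_apply]

lemma zmod_dvd_sub_iff {M b : ℕ} [NeZero M] (hb : 0 < b) (a : ℕ) :
    M ∣ b ^ a - 1 ↔ (b : ZMod M) ^ a = 1 := by
  have h1 : 1 ≤ b ^ a := Nat.one_le_pow _ _ hb
  rw [← ZMod.natCast_eq_zero_iff, Nat.cast_sub h1]
  push_cast
  rw [sub_eq_zero]

lemma zmod_dvd_add_iff {M b : ℕ} [NeZero M] (a : ℕ) :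
    M ∣ b ^ a + 1 ↔ (b : ZMod M) ^ a = -1 := by
  rw [← ZMod.natCast_eq_zero_iff]
  push_cast
  rw [add_eq_zero_iff_eq_neg]

lemma order_dvd_iff {M b : ℕ} [NeZero M] (hb : 0 < b) (h : b.Coprime M) (t : ℕ) :
    orderOf (ZMod.unitOfCoprime b h) ∣ t ↔ M ∣ b ^ t - 1 := by
  rw [orderOf_dvd_iff_pow_eq_one, zmod_dvd_sub_iff hb]
  constructor
  · intro h1
    rw [← ZMod.coe_unitOfCoprime b h, ← Units.val_pow_eq_pow_val, h1, Units.val_one]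
  · intro h1
    ext
    rw [Units.val_pow_eq_pow_val, ZMod.coe_unitOfCoprime, h1, Units.val_one]

lemma frob_root {p : ℕ} [Fact p.Prime] {F : Type*} [Field F] [Algebra (ZMod p) F]
    (χ : Polynomial (ZMod p)) (x : F)
    (h : (χ.map (algebraMap (ZMod p) F)).IsRoot x) :
    (χ.map (algebraMap (ZMod p) F)).IsRoot (x ^ p) := by
  haveI : CharP F p := charP_of_injective_algebraMap (algebraMap (ZMod p) F).injective p
  set f := algebraMap (ZMod p) F
  have hcomp : (frobenius F p : F →+* F).comp f = f := by
    ext a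
    simp only [RingHom.comp_apply, frobenius_def]
    rw [← map_pow, ZMod.pow_card]
  have hmap : (χ.map f).map (frobenius F p : F →+* F) = χ.map f := by
    rw [Polynomial.map_map, hcomp]
  have h2 : eval₂ (frobenius F p : F →+* F) (frobenius F p x) (χ.map f)
      = frobenius F p ((χ.map f).eval x) := Polynomial.eval₂_at_apply _ x
  have key : (χ.map f).eval (x ^ p) = frobenius F p ((χ.map f).eval x) := by
    conv_lhs => rw [← hmap]
    rw [Polynomial.eval_map, show (x : F) ^ p = frobenius F p x from rfl, h2]
  simp only [Polynomial.IsRoot] at h ⊢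
  rw [key, h, map_zero]

lemma lte_bound {q b u r s : ℕ} [Fact q.Prime] (hqodd : Odd q) (hb : 2 ≤ b) (hqb : q ∣ b - 1)
    (hsv : padicValNat q (b - 1) = s) (hu : u ≠ 0) (hdvd : q ^ r ∣ b ^ u - 1) (hrs : s ≤ r) :
    q ^ (r - s) ∣ u := by
  have hq2 : 2 ≤ q := (Fact.out : q.Prime).two_le
  have hx : ¬ q ∣ b := by
    intro hqb'
    have h1 : b - (b - 1) = 1 := by omega
    have : q ∣ 1 := h1 ▸ Nat.dvd_sub hqb' hqb
    have hle := Nat.le_of_dvd one_pos this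
    omega
  have hlte := padicValNat.pow_sub_pow (p := q) (x := b) (y := 1) hqodd (by omega)
    (by simpa using hqb) hx hu
  simp only [one_pow] at hlte
  have hbu : 2 ≤ b ^ u := by
    calc 2 = 2 ^ 1 := rfl
    _ ≤ 2 ^ u := Nat.pow_le_pow_right (by norm_num) (by omega)
    _ ≤ b ^ u := Nat.pow_le_pow_left hb u
  have hne : b ^ u - 1 ≠ 0 := by omega
  have hr' : r ≤ padicValNat q (b ^ u - 1) := by
    rcases (padicValNat_dvd_iff r (b ^ u - 1)).mp hdvd with h | h
    · omega
    · exact h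
  rw [hlte, hsv] at hr'
  exact (padicValNat_dvd_iff (r - s) u).mpr (Or.inr (by omega))


lemma exists_eigen {p : ℕ} [Fact p.Prime] {ι : Type*} [DecidableEq ι] [Fintype ι]
    (ψ : Matrix ι ι (ZMod p)) {q r : ℕ} [Fact q.Prime] (hpq : p ≠ q) (hr : 1 ≤ r)
    (hord : orderOf ψ = q ^ r) :
    ∃ lam : AlgebraicClosure (ZMod p), lam ^ (q ^ r) = 1 ∧ ¬ lam ^ (q ^ (r - 1)) = 1 ∧
      (ψ.charpoly.map (algebraMap (ZMod p) (AlgebraicClosure (ZMod p)))).IsRoot lam := by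
  classical
  have hqp : q.Prime := Fact.out
  have hpp : p.Prime := Fact.out
  have hψ1 : ψ ^ q ^ r = 1 := hord ▸ pow_orderOf_eq_one ψ
  have hψ2 : ψ ^ q ^ (r - 1) ≠ 1 := by
    intro h
    have h2 := orderOf_dvd_iff_pow_eq_one.mpr h
    rw [hord] at h2
    have := (Nat.pow_dvd_pow_iff_le_right hqp.one_lt).mp h2
    omega
  have hint : IsIntegral (ZMod p) ψ := ⟨ψ.charpoly, ψ.charpoly_monic, ψ.aeval_self_charpoly⟩
  set mp := minpoly (ZMod p) ψ with hmp
  have hPann : (Polynomial.aeval ψ) (X ^ q ^ r - 1 : (ZMod p)[X]) = 0 := by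
    simp [map_sub, hψ1]
  have hdvdP : mp ∣ X ^ q ^ r - 1 := minpoly.dvd (ZMod p) ψ hPann
  have hsep : (X ^ q ^ r - 1 : (ZMod p)[X]).Separable := by
    have hcast : ((q ^ r : ℕ) : ZMod p) ≠ 0 := by
      rw [Ne, ZMod.natCast_eq_zero_iff]
      intro hdvd
      exact hpq (hpp.dvd_of_dvd_pow hdvd |> (Nat.prime_dvd_prime_iff_eq hpp hqp).mp)
    have := Polynomial.separable_X_pow_sub_C (F := ZMod p) (n := q ^ r) 1 (by exact_mod_cast hcast)
      one_ne_zero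
    simpa [Polynomial.C_1] using this
  have hnd : ¬ mp ∣ (X ^ q ^ (r - 1) - 1 : (ZMod p)[X]) := by
    intro hdvd
    obtain ⟨c, hc⟩ := hdvd
    have : (Polynomial.aeval ψ) (X ^ q ^ (r - 1) - 1 : (ZMod p)[X]) = 0 := by
      rw [hc, _root_.map_mul, minpoly.aeval, zero_mul]
    apply hψ2
    have := this
    simp only [map_sub, map_pow, aeval_X, _root_.map_one] at this
    rwa [sub_eq_zero] at this
  set G := EuclideanDomain.gcd mp (X ^ q ^ (r - 1) - 1 : (ZMod p)[X]) with hG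
  have hGl : G ∣ mp := EuclideanDomain.gcd_dvd_left _ _
  have hGr : G ∣ X ^ q ^ (r - 1) - 1 := EuclideanDomain.gcd_dvd_right _ _
  obtain ⟨H, hH⟩ := hGl
  have hmp0 : mp ≠ 0 := minpoly.ne_zero hint
  have hH0 : H ≠ 0 := by rintro rfl; exact hmp0 (by simp [hH])
  have hHdeg : H.degree ≠ 0 := by
    intro hdeg
    have hu : IsUnit H := Polynomial.isUnit_iff_degree_eq_zero.mpr hdeg
    have hmpG : mp ∣ G := hH ▸ (associated_mul_unit_right G H hu).symm.dvd
    exact hnd (hmpG.trans hGr)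
  obtain ⟨lam, hlam⟩ := IsAlgClosed.exists_root (H.map (algebraMap (ZMod p) (AlgebraicClosure (ZMod p))))
    (by rwa [Polynomial.degree_map_eq_of_injective (algebraMap (ZMod p) (AlgebraicClosure (ZMod p))).injective])
  have hHdvdmp : H ∣ mp := Dvd.intro_left G hH.symm
  have hrootmp : (mp.map (algebraMap (ZMod p) (AlgebraicClosure (ZMod p)))).IsRoot lam := hlam.dvd (Polynomial.map_dvd (algebraMap (ZMod p) (AlgebraicClosure (ZMod p))) hHdvdmp)
  have hrootchar : (ψ.charpoly.map (algebraMap (ZMod p) (AlgebraicClosure (ZMod p)))).IsRoot lam :=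
    hrootmp.dvd (Polynomial.map_dvd (algebraMap (ZMod p) (AlgebraicClosure (ZMod p))) (ψ.minpoly_dvd_charpoly))
  have h1 : lam ^ q ^ r = 1 := by
    have := hrootmp.dvd (Polynomial.map_dvd (algebraMap (ZMod p) (AlgebraicClosure (ZMod p))) hdvdP)
    simp only [Polynomial.IsRoot, Polynomial.map_sub, Polynomial.map_pow, Polynomial.map_X,
      Polynomial.map_one, eval_sub, eval_pow, eval_X, eval_one] at this
    rwa [sub_eq_zero] at this
  refine ⟨lam, h1, ?_, hrootchar⟩
  intro h2
  have hd1 : (X - C lam) ∣ (X ^ q ^ (r - 1) - 1 : (AlgebraicClosure (ZMod p))[X]) := by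
    rw [Polynomial.dvd_iff_isRoot]
    simp [Polynomial.IsRoot, h2]
  have hd2 : (X - C lam) ∣ mp.map (algebraMap (ZMod p) (AlgebraicClosure (ZMod p))) := Polynomial.dvd_iff_isRoot.mpr hrootmp
  have hd3 : (X - C lam) ∣ G.map (algebraMap (ZMod p) (AlgebraicClosure (ZMod p))) := by
    rw [hG, ← Polynomial.gcd_map (algebraMap (ZMod p) (AlgebraicClosure (ZMod p)))]
    exact EuclideanDomain.dvd_gcd hd2 (by
      have : (X ^ q ^ (r - 1) - 1 : (ZMod p)[X]).map (algebraMap (ZMod p) (AlgebraicClosure (ZMod p))) = (X ^ q ^ (r - 1) - 1 : (AlgebraicClosure (ZMod p))[X]) := by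
        simp [Polynomial.map_sub, Polynomial.map_pow]
      rw [this]; exact hd1)
  have hd4 : (X - C lam) ∣ H.map (algebraMap (ZMod p) (AlgebraicClosure (ZMod p))) := Polynomial.dvd_iff_isRoot.mpr hlam
  have hsq : (X - C lam) * (X - C lam) ∣ (X ^ q ^ r - 1 : (AlgebraicClosure (ZMod p))[X]) := by
    have h5 : (X - C lam) * (X - C lam) ∣ (G.map (algebraMap (ZMod p) (AlgebraicClosure (ZMod p)))) * (H.map (algebraMap (ZMod p) (AlgebraicClosure (ZMod p)))) := mul_dvd_mul hd3 hd4
    have h6 : (G.map (algebraMap (ZMod p) (AlgebraicClosure (ZMod p)))) * (H.map (algebraMap (ZMod p) (AlgebraicClosure (ZMod p)))) = mp.map (algebraMap (ZMod p) (AlgebraicClosure (ZMod p))) := by rw [← Polynomial.map_mul, ← hH]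
    have h7 : mp.map (algebraMap (ZMod p) (AlgebraicClosure (ZMod p))) ∣ (X ^ q ^ r - 1 : (AlgebraicClosure (ZMod p))[X]) := by
      have := Polynomial.map_dvd (algebraMap (ZMod p) (AlgebraicClosure (ZMod p))) hdvdP
      simpa [Polynomial.map_sub, Polynomial.map_pow] using this
    exact (h6 ▸ h5).trans h7
  have hmapped : ((X ^ q ^ r - 1 : (ZMod p)[X]).map (algebraMap (ZMod p) (AlgebraicClosure (ZMod p)))) = (X ^ q ^ r - 1 : (AlgebraicClosure (ZMod p))[X]) := by simp
  have hsf : Squarefree (X ^ q ^ r - 1 : (AlgebraicClosure (ZMod p))[X]) := by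
    rw [← hmapped]; exact (hsep.map).squarefree
  exact absurd (hsf _ hsq) (Polynomial.not_isUnit_X_sub_C lam)

lemma arith_main (p q : ℕ) (hp : p.Prime) (hq : q.Prime) (hq2 : q ≠ 2) (hpq : p ≠ q)
    (s : ℕ) (hs : q ^ s ∣ p ^ (2 * minExp p q) - 1)
    (hs' : ¬ q ^ (s + 1) ∣ p ^ (2 * minExp p q) - 1)
    (r : ℕ) (hr : s ≤ r) :
    1 ≤ s ∧ 0 < minExp p q ∧ ∃ t0 : ℕ, 0 < t0 ∧ (∀ t, q ^ r ∣ p ^ t - 1 ↔ t0 ∣ t) ∧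
      ((minExp p q * q ^ (r - s) ≤ t0 ∧ ∀ i, ¬ q ∣ p ^ i + 1) ∨
        2 * minExp p q * q ^ (r - s) ≤ t0) := by
  haveI hqf : Fact q.Prime := ⟨hq⟩
  haveI : NeZero q := ⟨hq.pos.ne'⟩
  have hqodd : Odd q := hq.odd_of_ne_two hq2
  have hq3 : 3 ≤ q := by
    have := hq.two_le; omega
  have hp2le : 2 ≤ p := hp.two_le
  have hqdvdp : ¬ q ∣ p := fun h => hpq ((Nat.prime_dvd_prime_iff_eq hq hp).mp h).symm
  have hpne0 : (p : ZMod q) ≠ 0 := by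
    rw [Ne, ZMod.natCast_eq_zero_iff]; exact hqdvdp
  set S : Set ℕ := {a : ℕ | 0 < a ∧ (q ∣ p ^ a - 1 ∨ q ∣ p ^ a + 1)} with hS
  have hSne : S.Nonempty := by
    refine ⟨q - 1, by omega, Or.inl ?_⟩
    exact (zmod_dvd_sub_iff hp.pos _).mpr (ZMod.pow_card_sub_one_eq_one hpne0)
  have hmdef : minExp p q = sInf S := rfl
  have hmS : minExp p q ∈ S := hmdef ▸ Nat.sInf_mem hSne
  set m := minExp p q with hm
  obtain ⟨hm1, hmalt⟩ := hmS
  -- q ∣ p^(2m) - 1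
  have h2m : q ∣ p ^ (2 * m) - 1 := by
    rw [zmod_dvd_sub_iff hp.pos, show 2 * m = m * 2 from mul_comm 2 m, pow_mul]
    rcases hmalt with h | h
    · rw [(zmod_dvd_sub_iff hp.pos _).mp h]; norm_num
    · rw [(zmod_dvd_add_iff _).mp h]; norm_num
  have hs1 : 1 ≤ s := by
    by_contra h
    push_neg at h
    interval_cases s
    · exact hs' (by simpa using h2m)
  have hr1 : 1 ≤ r := le_trans hs1 hr
  have hpm1 : 1 ≤ p ^ (2 * m) := Nat.one_le_pow _ _ hp.pos
  have hpmbig : 2 ≤ p ^ (2 * m) := by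
    calc 2 = 2 ^ 1 := rfl
    _ ≤ 2 ^ (2 * m) := Nat.pow_le_pow_right (by norm_num) (by omega)
    _ ≤ p ^ (2 * m) := Nat.pow_le_pow_left hp2le _
  have hsval : padicValNat q (p ^ (2 * m) - 1) = s := by
    have hne : p ^ (2 * m) - 1 ≠ 0 := by omega
    have h1 : s ≤ padicValNat q (p ^ (2 * m) - 1) := by
      rcases (padicValNat_dvd_iff s (p ^ (2 * m) - 1)).mp hs with h | h
      · omega
      · exact h
    have h2 : padicValNat q (p ^ (2 * m) - 1) ≤ s := by
      by_contra hlt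
      push_neg at hlt
      exact hs' ((padicValNat_dvd_iff (s + 1) _).mpr (Or.inr (by omega)))
    omega
  -- order of p mod q
  set e := orderOf ((p : ZMod q)) with he
  have hefin : IsOfFinOrder ((p : ZMod q)) :=
    isOfFinOrder_iff_pow_eq_one.mpr ⟨q - 1, by omega, ZMod.pow_card_sub_one_eq_one hpne0⟩
  have hepos : 0 < e := hefin.orderOf_pos
  have he_div : ∀ t, q ∣ p ^ t - 1 → e ∣ t := by
    intro t ht
    exact orderOf_dvd_iff_pow_eq_one.mpr ((zmod_dvd_sub_iff hp.pos t).mp ht)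
  have hme : m ≤ e := by
    rw [hmdef]
    exact Nat.sInf_le ⟨hepos, Or.inl ((zmod_dvd_sub_iff hp.pos e).mpr (pow_orderOf_eq_one _))⟩
  have he2m : e ∣ 2 * m := he_div _ h2m
  -- modulus q^r
  haveI : NeZero (q ^ r) := ⟨pow_ne_zero r hq.pos.ne'⟩
  have hcop : p.Coprime (q ^ r) := ((Nat.coprime_primes hp hq).mpr hpq).pow_right r
  set t0 := orderOf (ZMod.unitOfCoprime p hcop) with ht0
  have ht0pos : 0 < t0 := orderOf_pos _
  have hiff : ∀ t, q ^ r ∣ p ^ t - 1 ↔ t0 ∣ t := fun t => (order_dvd_iff hp.pos hcop t).symm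
  have hq_t0 : q ∣ p ^ t0 - 1 :=
    dvd_trans (dvd_pow_self q (by omega : r ≠ 0)) ((hiff t0).mpr dvd_rfl)
  refine ⟨hs1, hm1, t0, ht0pos, hiff, ?_⟩
  have hfact : p ^ (2 * m) - 1 = (p ^ m - 1) * (p ^ m + 1) := by
    have ha : 1 ≤ p ^ m := Nat.one_le_pow _ _ hp.pos
    have hsq : p ^ (2 * m) = p ^ m * p ^ m := by
      rw [two_mul, pow_add]
    have ham : 1 ≤ p ^ m * p ^ m := Nat.one_le_iff_ne_zero.mpr (Nat.mul_ne_zero (by omega) (by omega))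
    rw [hsq]
    zify [ha, ham]
    ring
  have hpm2 : 2 ≤ p ^ m := by
    calc 2 = 2 ^ 1 := rfl
    _ ≤ 2 ^ m := Nat.pow_le_pow_right (by norm_num) hm1
    _ ≤ p ^ m := Nat.pow_le_pow_left hp2le m
  rcases hmalt with hA | hB
  · -- eta = 1 case
    left
    have he_m : e ∣ m := he_div m hA
    have heqm : e = m := by
      have := Nat.le_of_dvd hm1 he_m; omega
    have hpm_one : (p : ZMod q) ^ m = 1 := (zmod_dvd_sub_iff hp.pos m).mp hA
    haveI : Fact (2 < q) := ⟨by omega⟩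
    have noadd : ∀ i, ¬ q ∣ p ^ i + 1 := by
      intro i hi
      have hni : (p : ZMod q) ^ i = -1 := (zmod_dvd_add_iff i).mp hi
      have hn1 : (-1 : ZMod q) ≠ 1 := ZMod.neg_one_ne_one
      have hmi : ¬ m ∣ i := by
        rintro ⟨c, rfl⟩
        rw [pow_mul, hpm_one, one_pow] at hni
        exact hn1 hni.symm
      have h2i : m ∣ 2 * i := by
        rw [← heqm]
        apply orderOf_dvd_iff_pow_eq_one.mpr
        rw [mul_comm, pow_mul, hni, neg_one_sq]
      have hmeven : Even m := by
        by_contra hodd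
        rw [Nat.not_even_iff_odd] at hodd
        have h2dvd : ¬ 2 ∣ m := by
          intro hd
          exact (Nat.not_even_iff_odd.mpr hodd) (even_iff_two_dvd.mpr hd)
        have hcop2 : m.Coprime 2 :=
          Nat.coprime_comm.mp ((Nat.prime_two.coprime_iff_not_dvd).mpr h2dvd)
        exact hmi (hcop2.dvd_of_dvd_mul_left h2i)
      obtain ⟨m', hm'⟩ := hmeven
      have hm'pos : 0 < m' := by omega
      have hm'i : m' ∣ i := by
        have h2 : 2 * m' ∣ 2 * i := by rw [show 2 * m' = m by omega]; exact h2i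
        exact (Nat.mul_dvd_mul_iff_left (by norm_num : 0 < 2)).mp h2
      obtain ⟨j, hj⟩ := hm'i
      have hjodd : Odd j := by
        rcases Nat.even_or_odd j with hje | hjo
        · obtain ⟨j', hj'⟩ := hje
          apply absurd _ hmi
          refine ⟨j', ?_⟩
          rw [hj, hj', hm']
          ring
        · exact hjo
      have hx2 : ((p : ZMod q) ^ m') ^ 2 = 1 := by
        rw [← pow_mul, show m' * 2 = m by omega]; exact hpm_one
      have hxj : ((p : ZMod q) ^ m') ^ j = -1 := by
        rw [← pow_mul, ← hj]; exact hni
      obtain ⟨c, hc⟩ := hjodd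
      have hxx : ((p : ZMod q) ^ m') = -1 := by
        have hsplit : ((p : ZMod q) ^ m') ^ j = (((p : ZMod q) ^ m') ^ 2) ^ c * (p : ZMod q) ^ m' := by
          rw [hc, pow_add, pow_one, pow_mul]
        rw [hsplit, hx2, one_pow, one_mul] at hxj
        exact hxj
      have hge : m ≤ m' := by
        rw [hmdef]
        exact Nat.sInf_le ⟨hm'pos, Or.inr ((zmod_dvd_add_iff m').mpr hxx)⟩
      omega
    have hvm : padicValNat q (p ^ m - 1) = s := by
      have hne1 : p ^ m - 1 ≠ 0 := by omega
      have hne2 : p ^ m + 1 ≠ 0 := by omega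
      have hmul := padicValNat.mul (p := q) hne1 hne2
      rw [← hfact, hsval] at hmul
      have hz : padicValNat q (p ^ m + 1) = 0 := padicValNat.eq_zero_of_not_dvd (noadd m)
      omega
    have hm_t0 : m ∣ t0 := heqm ▸ he_div t0 hq_t0
    obtain ⟨u0, hu0⟩ := hm_t0
    have hu0pos : u0 ≠ 0 := by rintro rfl; simp at hu0; omega
    have hqd : q ^ (r - s) ∣ u0 := by
      apply lte_bound (b := p ^ m) hqodd hpm2 hA hvm hu0pos ?_ hr
      rw [← pow_mul, ← hu0]; exact (hiff t0).mpr dvd_rfl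
    have hu0ge := Nat.le_of_dvd (by omega) hqd
    refine ⟨?_, noadd⟩
    calc m * q ^ (r - s) ≤ m * u0 := Nat.mul_le_mul_left m hu0ge
    _ = t0 := hu0.symm
  · -- eta = -1 case
    right
    have hnm : ¬ q ∣ p ^ m - 1 := by
      intro h
      have h2 : q ∣ (p ^ m + 1) - (p ^ m - 1) := Nat.dvd_sub hB h
      have heq : (p ^ m + 1) - (p ^ m - 1) = 2 := by omega
      rw [heq] at h2
      have := Nat.le_of_dvd (by norm_num) h2
      omega
    have heq2m : e = 2 * m := by
      obtain ⟨k, hk⟩ := he2m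
      have hkpos : 0 < k := by
        rcases Nat.eq_zero_or_pos k with rfl | h
        · omega
        · exact h
      have hk2 : k ≤ 2 := by
        by_contra h
        push_neg at h
        have h3 : e * 3 ≤ e * k := Nat.mul_le_mul_left e h
        nlinarith
      interval_cases k
      · omega
      · have hem : e = m := by omega
        exfalso
        apply hnm
        rw [← hem]
        exact (zmod_dvd_sub_iff hp.pos e).mpr (pow_orderOf_eq_one _)
    have hm_t0 : 2 * m ∣ t0 := heq2m ▸ he_div t0 hq_t0
    obtain ⟨u0, hu0⟩ := hm_t0
    have hu0pos : u0 ≠ 0 := by rintro rfl; simp at hu0; omega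
    have hqd : q ^ (r - s) ∣ u0 := by
      apply lte_bound (b := p ^ (2 * m)) hqodd hpmbig h2m hsval hu0pos ?_ hr
      rw [← pow_mul, ← hu0]; exact (hiff t0).mpr dvd_rfl
    have hu0ge := Nat.le_of_dvd (by omega) hqd
    calc 2 * m * q ^ (r - s) ≤ 2 * m * u0 := Nat.mul_le_mul_left _ hu0ge
    _ = t0 := hu0.symm

end Helpers

theorem stmt16 (p q : ℕ) (hp : p.Prime) (hq : q.Prime) (hp2 : p ≠ 2) (hq2 : q ≠ 2)
    (hpq : p ≠ q)
    (s : ℕ) (hs : q ^ s ∣ p ^ (2 * minExp p q) - 1)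
    (hs' : ¬ q ^ (s + 1) ∣ p ^ (2 * minExp p q) - 1)
    (r : ℕ) (hr : s ≤ r) (n : ℕ) (hn : n = 2 * minExp p q * q ^ (r - s))
    (B : Matrix (Fin n) (Fin n) (ZMod p)) (hsymm : B.IsSymm) (hdet : IsUnit B.det)
    (heps : epsilon p B = eta p q ^ q ^ (r - s))
    (ψ : Matrix (Fin n) (Fin n) (ZMod p)) (hiso : ψᵀ * B * ψ = B)
    (hord : orderOf ψ = q ^ r) :
    ∀ x : Fin n → ZMod p, ψ.mulVec x = x → x = 0 := by
  classical
  haveI hpF : Fact p.Prime := ⟨hp⟩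
  haveI hqF : Fact q.Prime := ⟨hq⟩
  obtain ⟨hs1, hm1, t0, ht0pos, hiffQ, hcases⟩ := arith_main p q hp hq hq2 hpq s hs hs' r hr
  have hr1 : 1 ≤ r := le_trans hs1 hr
  intro x hfix
  by_contra hx0
  set F := AlgebraicClosure (ZMod p) with hF
  set f := algebraMap (ZMod p) F with hf
  set Φ := ψ.charpoly.map f with hΦ
  have hmon : ψ.charpoly.Monic := ψ.charpoly_monic
  have hdeg : ψ.charpoly.natDegree = n := by
    rw [Matrix.charpoly_natDegree_eq_dim]; simp
  have hΦmon : Φ.Monic := hmon.map f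
  have hΦne : Φ ≠ 0 := hΦmon.ne_zero
  have hΦdeg : Φ.natDegree = n := by
    rw [hΦ, Polynomial.natDegree_map_eq_of_injective f.injective, hdeg]
  -- 1 is a root
  have hroot1K : ψ.charpoly.IsRoot 1 := by
    have hmv : ((1 : Matrix (Fin n) (Fin n) (ZMod p)) - ψ).mulVec x = 0 := by
      rw [Matrix.sub_mulVec, Matrix.one_mulVec, hfix, sub_self]
    have hdet0 : ((1 : Matrix (Fin n) (Fin n) (ZMod p)) - ψ).det = 0 :=
      Matrix.exists_mulVec_eq_zero_iff.mp ⟨x, hx0, hmv⟩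
    have := evalCharpoly ψ (1 : ZMod p)
    rw [Polynomial.IsRoot, this, one_smul, hdet0]
  have hroot1 : Φ.IsRoot 1 := by
    have h0 : Polynomial.eval 1 ψ.charpoly = 0 := hroot1K
    rw [Polynomial.IsRoot, hΦ, ← map_one f, Polynomial.eval_map, Polynomial.eval₂_at_apply,
      h0, map_zero]
  -- eigenvalue of order q^r
  obtain ⟨lam, hl1, hl2, hlroot⟩ := exists_eigen ψ (q := q) (r := r) hpq hr1 hord
  have hlam0 : lam ≠ 0 := by
    intro h
    rw [h, zero_pow (pow_ne_zero r hq.pos.ne')] at hl1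
    exact zero_ne_one hl1
  have hlord : orderOf lam = q ^ r := by
    rcases Nat.exists_eq_add_of_le hr1 with ⟨r', hr'⟩
    subst hr'
    have e1 : 1 + r' - 1 = r' := by omega
    rw [e1] at hl2
    have e2 : 1 + r' = r' + 1 := by omega
    rw [e2] at hl1 ⊢
    exact orderOf_eq_prime_pow hl2 hl1
  have hiffl : ∀ N, lam ^ N = 1 ↔ q ^ r ∣ N := by
    intro N
    constructor
    · intro h; exact hlord ▸ orderOf_dvd_of_pow_eq_one h
    · intro h; exact orderOf_dvd_iff_pow_eq_one.mp (hlord ▸ h)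
  -- frobenius orbits are roots
  have horb : ∀ (μ : F), Φ.IsRoot μ → ∀ i, Φ.IsRoot (μ ^ p ^ i) := by
    intro μ hμ i
    induction i with
    | zero => simpa using hμ
    | succ i ih =>
        have h := frob_root ψ.charpoly (μ ^ p ^ i) ih
        rwa [← pow_mul, ← pow_succ] at h
  -- injectivity of the orbit map
  have hne1 : ∀ (μ : F), (∀ N, μ ^ N = 1 ↔ q ^ r ∣ N) → ∀ i, μ ^ p ^ i ≠ 1 := by
    intro μ hiffμ i h
    have h1 := (hiffμ _).mp h
    have hq1 : q ∣ p ^ i := dvd_trans (dvd_pow_self q (by omega : r ≠ 0)) h1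
    have hq2' := hq.dvd_of_dvd_pow hq1
    exact hpq ((Nat.prime_dvd_prime_iff_eq hq hp).mp hq2').symm
  have hchain : ∀ (μ : F), μ ≠ 0 → (∀ N, μ ^ N = 1 ↔ q ^ r ∣ N) →
      ∀ i j, i ≤ j → μ ^ p ^ i = μ ^ p ^ j → t0 ∣ j - i := by
    intro μ h0 hiffμ i j hij heq
    have hle : p ^ i ≤ p ^ j := Nat.pow_le_pow_right hp.pos hij
    have h1 : μ ^ (p ^ j - p ^ i) = 1 := by
      rw [pow_sub₀ μ h0 hle, heq, mul_inv_cancel₀ (pow_ne_zero _ h0)]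
    have h2 : q ^ r ∣ p ^ j - p ^ i := (hiffμ _).mp h1
    have h3 : p ^ j - p ^ i = p ^ i * (p ^ (j - i) - 1) := by
      rw [Nat.mul_sub, mul_one, ← pow_add]
      congr 2
      omega
    rw [h3] at h2
    have hcop : (q ^ r).Coprime (p ^ i) :=
      Nat.Coprime.pow r i (((Nat.coprime_primes hq hp).mpr (Ne.symm hpq)))
    exact (hiffQ (j - i)).mp (hcop.dvd_of_dvd_mul_left h2)
  have hinj : ∀ (μ : F), μ ≠ 0 → (∀ N, μ ^ N = 1 ↔ q ^ r ∣ N) →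
      Set.InjOn (fun i => μ ^ p ^ i) ↑(Finset.range t0) := by
    intro μ h0 hiffμ i hi j hj heq
    simp only [Finset.coe_range, Set.mem_Iio] at hi hj
    rcases le_total i j with h | h
    · have hd := hchain μ h0 hiffμ i j h heq
      have : j - i = 0 := by
        by_contra hneq
        have := Nat.le_of_dvd (by omega) hd
        omega
      omega
    · have hd := hchain μ h0 hiffμ j i h heq.symm
      have : i - j = 0 := by
        by_contra hneq
        have := Nat.le_of_dvd (by omega) hd
        omega
      omega
  -- the root finset
  set R := Φ.roots.toFinset with hR
  have hRcard : R.card ≤ n := by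
    calc R.card ≤ Multiset.card Φ.roots := Multiset.toFinset_card_le _
    _ ≤ Φ.natDegree := Polynomial.card_roots' Φ
    _ = n := hΦdeg
  have hmemR : ∀ μ : F, Φ.IsRoot μ → μ ∈ R := fun μ h =>
    Multiset.mem_toFinset.mpr ((Polynomial.mem_roots hΦne).mpr h)
  set S1 := (Finset.range t0).image (fun i => lam ^ p ^ i) with hS1
  have hS1sub : S1 ⊆ R := by
    intro y hy
    obtain ⟨i, _, rfl⟩ := Finset.mem_image.mp hy
    exact hmemR _ (horb lam hlroot i)
  have hS1card : S1.card = t0 := by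
    rw [hS1, Finset.card_image_of_injOn (hinj lam hlam0 hiffl), Finset.card_range]
  have h1S1 : (1 : F) ∉ S1 := by
    intro h
    obtain ⟨i, _, hi⟩ := Finset.mem_image.mp h
    exact hne1 lam hiffl i hi
  rcases hcases with ⟨hbound, hnoadd⟩ | hbound
  · -- eta = 1 : need the inverse orbit too
    -- reciprocity: lam⁻¹ is a root of Φ
    set ψf := ψ.map f with hψf
    set Bf := B.map f with hBf
    have hψ1 : ψ ^ q ^ r = 1 := hord ▸ pow_orderOf_eq_one ψ
    have hψfpow : ψf ^ q ^ r = 1 := by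
      have h := congrArg (RingHom.mapMatrix (m := Fin n) f) hψ1
      simpa [map_pow, RingHom.mapMatrix_apply] using h
    have hiso_f : ψfᵀ * Bf * ψf = Bf := by
      have h := congrArg (fun M => M.map f) hiso
      simpa [Matrix.map_mul, Matrix.transpose_map] using h
    have hsymm_f : Bfᵀ = Bf := by
      have h := congrArg (fun M => M.map f) hsymm
      simpa [Matrix.transpose_map] using h
    have hdetB : Bf.det ≠ 0 := by
      have h : f B.det = Bf.det := by
        rw [RingHom.map_det, RingHom.mapMatrix_apply]
      rw [← h]
      exact fun h0 => hdet.ne_zero (f.injective (by rw [h0, map_zero]))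
    have hdetψ : ψf.det ≠ 0 := by
      intro h0
      have h1 : (ψf ^ q ^ r).det = 1 := by rw [hψfpow, Matrix.det_one]
      rw [Matrix.det_pow, h0, zero_pow (pow_ne_zero r hq.pos.ne')] at h1
      exact zero_ne_one h1
    have hevalΦ : ∀ μ : F, Φ.eval μ = (μ • (1 : Matrix (Fin n) (Fin n) F) - ψf).det := by
      intro μ
      rw [hΦ, ← Matrix.charpoly_map, ← evalCharpoly]
    have hdetlam : (lam • (1 : Matrix (Fin n) (Fin n) F) - ψf).det = 0 := by
      rw [← hevalΦ]; exact hlroot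
    have hident : ψfᵀ * Bf * (lam⁻¹ • (1 : Matrix (Fin n) (Fin n) F) - ψf)
        = (-lam⁻¹) • ((Bf * (lam • (1 : Matrix (Fin n) (Fin n) F) - ψf))ᵀ) := by
      rw [Matrix.mul_sub, Matrix.mul_smul, Matrix.mul_one, hiso_f,
        Matrix.mul_sub, Matrix.mul_smul, Matrix.mul_one, Matrix.transpose_sub,
        Matrix.transpose_smul, Matrix.transpose_mul, hsymm_f, smul_sub, smul_smul,
        neg_mul, inv_mul_cancel₀ hlam0]
      rw [neg_smul, neg_smul, one_smul, sub_neg_eq_add]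
      abel
    have hdetid := congrArg Matrix.det hident
    rw [Matrix.det_mul, Matrix.det_mul, Matrix.det_smul, Matrix.det_transpose,
      Matrix.det_transpose, Matrix.det_mul, hdetlam, mul_zero, mul_zero] at hdetid
    have hdetinv : (lam⁻¹ • (1 : Matrix (Fin n) (Fin n) F) - ψf).det = 0 := by
      rcases mul_eq_zero.mp hdetid with h | h
      · rcases mul_eq_zero.mp h with h' | h'
        · exact absurd h' hdetψ
        · exact absurd h' hdetB
      · exact h
    have hrootinv : Φ.IsRoot lam⁻¹ := by
      rw [Polynomial.IsRoot, hevalΦ]; exact hdetinv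
    have hiffinv : ∀ N, (lam⁻¹) ^ N = 1 ↔ q ^ r ∣ N := by
      intro N
      rw [inv_pow, inv_eq_one]
      exact hiffl N
    set S2 := (Finset.range t0).image (fun i => (lam⁻¹) ^ p ^ i) with hS2
    have hS2sub : S2 ⊆ R := by
      intro y hy
      obtain ⟨i, _, rfl⟩ := Finset.mem_image.mp hy
      exact hmemR _ (horb lam⁻¹ hrootinv i)
    have hS2card : S2.card = t0 := by
      rw [hS2, Finset.card_image_of_injOn (hinj lam⁻¹ (inv_ne_zero hlam0) hiffinv),
        Finset.card_range]
    have h1S2 : (1 : F) ∉ S2 := by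
      intro h
      obtain ⟨i, _, hi⟩ := Finset.mem_image.mp h
      exact hne1 lam⁻¹ hiffinv i hi
    have hdisj : Disjoint S1 S2 := by
      rw [Finset.disjoint_left]
      intro a ha1 ha2
      obtain ⟨i, _, rfl⟩ := Finset.mem_image.mp ha1
      obtain ⟨j, _, heq⟩ := Finset.mem_image.mp ha2
      have hprod : lam ^ (p ^ i + p ^ j) = 1 := by
        rw [pow_add, ← heq, inv_pow, inv_mul_cancel₀ (pow_ne_zero _ hlam0)]
      have hdvd : q ^ r ∣ p ^ i + p ^ j := (hiffl _).mp hprod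
      have hqdvd : q ∣ p ^ i + p ^ j :=
        dvd_trans (dvd_pow_self q (by omega : r ≠ 0)) hdvd
      have hcp : q.Coprime p := (Nat.coprime_primes hq hp).mpr (Ne.symm hpq)
      rcases le_total i j with h | h
      · have he : p ^ i + p ^ j = p ^ i * (p ^ (j - i) + 1) := by
          have hexp : i + (j - i) = j := by omega
          rw [Nat.mul_add, mul_one, ← pow_add, hexp]
          all_goals omega
        rw [he] at hqdvd
        exact hnoadd (j - i) ((hcp.pow_right i).dvd_of_dvd_mul_left hqdvd)
      · have he : p ^ i + p ^ j = p ^ j * (p ^ (i - j) + 1) := by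
          have hexp : j + (i - j) = i := by omega
          rw [Nat.mul_add, mul_one, ← pow_add, hexp]
          all_goals omega
        rw [he] at hqdvd
        exact hnoadd (i - j) ((hcp.pow_right j).dvd_of_dvd_mul_left hqdvd)
    have hcard : (insert (1 : F) (S1 ∪ S2)).card = 2 * t0 + 1 := by
      rw [Finset.card_insert_of_notMem (by
        simp only [Finset.mem_union, not_or]
        exact ⟨h1S1, h1S2⟩),
        Finset.card_union_of_disjoint hdisj, hS1card, hS2card]
      omega
    have hsub : insert (1 : F) (S1 ∪ S2) ⊆ R := by
      intro y hy
      rcases Finset.mem_insert.mp hy with rfl | hy'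
      · exact hmemR 1 hroot1
      · rcases Finset.mem_union.mp hy' with h | h
        · exact hS1sub h
        · exact hS2sub h
    have hle := Finset.card_le_card hsub
    rw [hcard] at hle
    have hn2 : n ≤ 2 * t0 := by
      have : n = 2 * (minExp p q * q ^ (r - s)) := by rw [hn, mul_assoc]
      omega
    omega
  · -- eta = -1 : single orbit suffices
    have hcard : (insert (1 : F) S1).card = t0 + 1 := by
      rw [Finset.card_insert_of_notMem h1S1, hS1card]
    have hsub : insert (1 : F) S1 ⊆ R := by
      intro y hy
      rcases Finset.mem_insert.mp hy with rfl | hy'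
      · exact hmemR 1 hroot1
      · exact hS1sub hy'
    have hle := Finset.card_le_card hsub
    rw [hcard] at hle
    have hn2 : n ≤ t0 := by rw [hn]; exact hbound
    omega
end
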